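/- arXiv:0907.0774 — 9 statements merged into one kernel-verified Lean document; each statement's English description precedes it below -/
import Mathlib

section
/- Let V be a finite-dimensional vector space over a field F, L a linear subspace of End(V), and e ∈ L an idempotent (e∘e = e) whose rank is maximal among all elements of L. If L is spanned (as an F-subspace) by e together with some set of rank-one linear maps, then for every finite product h₁h₂⋯hₛ of elements of L and every v ∈ ker e, the vector h₁h₂⋯hₛ v lies in the image of e. -/
open Module LinearMap

/-! Call `c₀, …, c_k ∈ S` a chain if all composites `c_i ∘ c_{i+1}` are nonzero. Suppose some chain
starts outside `range e` and ends with a map that is nonzero at some `v ∈ ker e`, and take a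
shortest one. Shortness forces `range c_i ≤ range e` for `i > 0`, `c_i (ker e) = 0` for `i < k`,
and `c_j ∘ c_i = 0` for `i ≥ j + 2`; a triangular computation, using that every `c_i` has rank
one, then shows that `e + ∑ c_i ∈ L` is injective on `range e ⊕ F v`, contradicting the maximality
of the rank of `e`. Hence the vectors of `range e` killed by every map reachable by a chain from
outside `range e` form a subspace `Y`, and each of `e` and the maps in `S`, hence all of `L`, sends
`ker e ⊕ Y` into `Y`. -/

section

variable {F V : Type*} [Field F] [AddCommGroup V] [Module F V]
variable {M N : Type*} [AddCommGroup M] [Module F M] [AddCommGroup N] [Module F N]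

theorem Submodule.inf_eq_bot_of_finrank_eq_one {P Q : Submodule F V} (hP : finrank F P = 1)
    (hPQ : ¬P ≤ Q) : P ⊓ Q = ⊥ := by
  have : FiniteDimensional F P := Module.finite_of_finrank_eq_succ hP
  have : FiniteDimensional F ↥(P ⊓ Q) := Submodule.finiteDimensional_inf_left P Q
  have := Submodule.finrank_lt_finrank_of_lt (inf_lt_left.2 hPQ)
  rw [← Submodule.finrank_eq_zero]
  omega

theorem LinearMap.apply_eq_zero_of_comp_ne_zero {f : V →ₗ[F] N} {g : M →ₗ[F] V}
    (hg : finrank F (range g) = 1) (hfg : f ∘ₗ g ≠ 0) {y : M} (hy : f (g y) = 0) : g y = 0 := by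
  have hbot := Submodule.inf_eq_bot_of_finrank_eq_one hg (mt range_le_ker_iff.1 hfg)
  exact (Submodule.eq_bot_iff _).1 hbot _ ⟨mem_range_self g y, hy⟩

theorem LinearMap.finrank_lt_finrank_range [FiniteDimensional F V] {T : V →ₗ[F] N}
    {W P : Submodule F V} (hWP : W < P) (hP : Disjoint P (ker T)) :
    finrank F W < finrank F (range T) :=
  calc finrank F W < finrank F P := Submodule.finrank_lt_finrank_of_lt hWP
    _ = finrank F (range (T.domRestrict P)) :=
      (finrank_range_of_inj (injective_domRestrict_iff.2 hP)).symm
    _ ≤ finrank F (range T) := Submodule.finrank_mono (range_domRestrict_le_range T P)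

theorem LinearMap.apply_mem_of_mem_span {s : Set (V →ₗ[F] N)} {U : Submodule F N} {x : V}
    (hs : ∀ g ∈ s, g x ∈ U) {h : V →ₗ[F] N} (hh : h ∈ Submodule.span F s) : h x ∈ U :=
  Submodule.span_le (p := U.comap (applyₗ x)).2 hs hh

structure IsCompChain (S : Set (V →ₗ[F] V)) (k : ℕ) (c : ℕ → V →ₗ[F] V) : Prop where
  mem : ∀ i ≤ k, c i ∈ S
  comp_ne_zero : ∀ i < k, c i ∘ₗ c (i + 1) ≠ 0

namespace IsCompChain

variable {S : Set (V →ₗ[F] V)} {k : ℕ} {c : ℕ → V →ₗ[F] V}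

theorem take (hc : IsCompChain S k c) {i : ℕ} (hi : i ≤ k) : IsCompChain S i c :=
  ⟨fun j hj => hc.mem j (hj.trans hi), fun j hj => hc.comp_ne_zero j (hj.trans_le hi)⟩

theorem drop (hc : IsCompChain S k c) {i : ℕ} (hi : i ≤ k) :
    IsCompChain S (k - i) (fun n => c (n + i)) :=
  ⟨fun j _ => hc.mem _ (by omega),
    fun j _ => by simpa [Nat.add_right_comm] using hc.comp_ne_zero (j + i) (by omega)⟩

theorem splice (hc : IsCompChain S k c) {j i : ℕ} (hji : j < i) (hik : i ≤ k)
    (hne : c j ∘ₗ c i ≠ 0) :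
    IsCompChain S (k - (i - j - 1)) (fun n => if n ≤ j then c n else c (n + (i - j - 1))) := by
  refine ⟨fun n _ => ?_, fun n _ => ?_⟩
  · split_ifs
    · exact hc.mem n (by omega)
    · exact hc.mem _ (by omega)
  · by_cases hn : n + 1 ≤ j
    · simpa [hn, show n ≤ j by omega] using hc.comp_ne_zero n (by omega)
    by_cases hnj : n = j
    · subst hnj
      simpa [show n + 1 + (i - n - 1) = i by omega] using hne
    · simpa [hn, show ¬n ≤ j by omega, Nat.add_right_comm] using
        hc.comp_ne_zero (n + (i - j - 1)) (by omega)

theorem snoc (hc : IsCompChain S k c) {g : V →ₗ[F] V} (hg : g ∈ S) (hne : c k ∘ₗ g ≠ 0) :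
    IsCompChain S (k + 1) (fun n => if n ≤ k then c n else g) := by
  refine ⟨fun n _ => ?_, fun n _ => ?_⟩
  · split_ifs
    · exact hc.mem n (by omega)
    · exact hg
  · by_cases hn : n + 1 ≤ k
    · simpa [hn, show n ≤ k by omega] using hc.comp_ne_zero n (by omega)
    · obtain rfl : n = k := by omega
      simpa using hne

end IsCompChain

def IsReachable (e : V →ₗ[F] V) (S : Set (V →ₗ[F] V)) (f : V →ₗ[F] V) : Prop :=
  ∃ k c, IsCompChain S k c ∧ ¬range (c 0) ≤ range e ∧ c k = f

namespace IsReachable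

variable {e f g : V →ₗ[F] V} {S : Set (V →ₗ[F] V)}

theorem of_not_range_le (hg : g ∈ S) (hge : ¬range g ≤ range e) : IsReachable e S g :=
  ⟨0, fun _ => g, ⟨fun _ _ => hg, fun _ h => absurd h (Nat.not_lt_zero _)⟩, hge, rfl⟩

theorem step (hf : IsReachable e S f) (hg : g ∈ S) (hfg : f ∘ₗ g ≠ 0) : IsReachable e S g := by
  obtain ⟨k, c, hc, h0, rfl⟩ := hf
  exact ⟨k + 1, _, hc.snoc hg hfg, by simpa using h0, by simp⟩

end IsReachable

section ShortestChain

variable {e : V →ₗ[F] V} {S : Set (V →ₗ[F] V)} {k : ℕ} {c : ℕ → V →ₗ[F] V}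

theorem apply_eq_zero_of_add_sum_apply_eq_zero (hid : IsIdempotentElem e)
    (hS1 : ∀ f ∈ S, finrank F (range f) = 1) (hc : IsCompChain S k c)
    (h0 : ¬range (c 0) ≤ range e) (hpos : ∀ i, 0 < i → i ≤ k → range (c i) ≤ range e)
    (hlt : ∀ i < k, ker e ≤ ker (c i)) (hskip : ∀ j i, j + 2 ≤ i → i ≤ k → c j ∘ₗ c i = 0)
    {y : V} (hy : e y + ∑ i ∈ Finset.range (k + 1), c i y = 0) : ∀ i ≤ k, c i y = 0 := by
  intro i
  induction i using Nat.strong_induction_on with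
  | _ i ih =>
  intro hik
  rcases i with _ | i
  · have hmem : c 0 y ∈ range (c 0) ⊓ range e := by
      refine ⟨mem_range_self _ y, ?_⟩
      rw [Finset.sum_range_succ', ← add_assoc] at hy
      rw [eq_neg_of_add_eq_zero_right hy]
      refine neg_mem (add_mem (mem_range_self e y) (Submodule.sum_mem _ fun j hj => ?_))
      exact hpos (j + 1) j.succ_pos (by simpa using hj) (mem_range_self _ y)
    rwa [Submodule.inf_eq_bot_of_finrank_eq_one (hS1 _ (hc.mem 0 hik)) h0] at hmem
  · have hcomp : c i (c (i + 1) y) = 0 := by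
      have hey : c i (e y) = c i y := by
        rw [← sub_eq_zero, ← map_sub]
        exact hlt i (by omega) (by rw [mem_ker, map_sub, ← Module.End.mul_apply, hid.eq, sub_self])
      have hsum : ∑ j ∈ Finset.range (k + 1), c i (c j y) = c i (c (i + 1) y) := by
        refine Finset.sum_eq_single (i + 1) (fun j hj hne => ?_)
          fun h => absurd (Finset.mem_range.2 (by omega)) h
        rcases Nat.lt_or_gt_of_ne hne with hj' | hj'
        · rw [ih j hj' (by omega), map_zero]
        · exact LinearMap.congr_fun (hskip i j (by omega) (by simpa [Nat.lt_succ_iff] using hj)) y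
      simpa [hey, ih i (by omega) (by omega), hsum] using congrArg (c i) hy
    exact apply_eq_zero_of_comp_ne_zero (hS1 _ (hc.mem _ hik)) (hc.comp_ne_zero i (by omega))
      hcomp

theorem disjoint_ker_add_sum (hid : IsIdempotentElem e)
    (hS1 : ∀ f ∈ S, finrank F (range f) = 1) (hc : IsCompChain S k c)
    (h0 : ¬range (c 0) ≤ range e) (hpos : ∀ i, 0 < i → i ≤ k → range (c i) ≤ range e)
    (hlt : ∀ i < k, ker e ≤ ker (c i)) (hskip : ∀ j i, j + 2 ≤ i → i ≤ k → c j ∘ₗ c i = 0)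
    {v : V} (hv : e v = 0) (hcv : c k v ≠ 0) :
    Disjoint (range e ⊔ F ∙ v) (ker (e + ∑ i ∈ Finset.range (k + 1), c i)) := by
  rw [disjoint_ker]
  intro y hy hTy
  have hy' : e y + ∑ i ∈ Finset.range (k + 1), c i y = 0 := by simpa using hTy
  have hcy := apply_eq_zero_of_add_sum_apply_eq_zero hid hS1 hc h0 hpos hlt hskip hy'
  have hey : e y = 0 := by
    rwa [Finset.sum_eq_zero fun i hi => hcy i (Nat.lt_succ_iff.1 (Finset.mem_range.1 hi)),
      add_zero] at hy'
  obtain ⟨w, hw, _, hz, rfl⟩ := Submodule.mem_sup.1 hy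
  obtain ⟨a, rfl⟩ := Submodule.mem_span_singleton.1 hz
  obtain rfl : w = 0 := by simpa [hid.mem_range_iff.1 hw, hv] using hey
  obtain rfl : a = 0 := by simpa [hcv] using hcy k le_rfl
  simp

end ShortestChain

theorem ker_le_ker_of_isCompChain {L : Submodule F (V →ₗ[F] V)} {e : V →ₗ[F] V}
    (hid : IsIdempotentElem e) (he : e ∈ L) {S : Set (V →ₗ[F] V)} (hSL : S ⊆ L)
    (hmax : ∀ h ∈ L, finrank F (range h) ≤ finrank F (range e))
    (hS1 : ∀ f ∈ S, finrank F (range f) = 1) [FiniteDimensional F V] (k : ℕ) :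
    ∀ c, IsCompChain S k c → ¬range (c 0) ≤ range e → ker e ≤ ker (c k) := by
  induction k using Nat.strong_induction_on with
  | _ k ih =>
  intro c hc h0
  by_contra hk
  obtain ⟨v, hv, hcv⟩ := SetLike.not_le_iff_exists.1 hk
  rw [mem_ker] at hv hcv
  -- By minimality of `k`, the chain admits no shorter subchain with the same properties.
  have hpos : ∀ i, 0 < i → i ≤ k → range (c i) ≤ range e := by
    intro i hi hik
    by_contra hi'
    have hsub := ih (k - i) (by omega) _ (hc.drop hik) (by simpa using hi')
    exact hk (by simpa [Nat.sub_add_cancel hik] using hsub)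
  have hlt : ∀ i < k, ker e ≤ ker (c i) := fun i hi => ih i hi c (hc.take hi.le) h0
  have hskip : ∀ j i, j + 2 ≤ i → i ≤ k → c j ∘ₗ c i = 0 := by
    intro j i hji hik
    by_contra hne
    have hsub := ih _ (by omega) _ (hc.splice (by omega) hik hne) (by simpa using h0)
    exact hk (by simpa [show ¬k - (i - j - 1) ≤ j by omega,
      show k - (i - j - 1) + (i - j - 1) = k by omega] using hsub)
  have hT : e + ∑ i ∈ Finset.range (k + 1), c i ∈ L :=
    add_mem he (Submodule.sum_mem _ fun i hi =>
      hSL (hc.mem i (Nat.lt_succ_iff.1 (Finset.mem_range.1 hi))))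
  have hvW : ¬F ∙ v ≤ range e := by
    rw [Submodule.span_singleton_le_iff_mem, hid.mem_range_iff, hv]
    exact fun h => hcv (by rw [← h, map_zero])
  exact (hmax _ hT).not_gt <| finrank_lt_finrank_range (left_lt_sup.2 hvW)
    (disjoint_ker_add_sum hid hS1 hc h0 hpos hlt hskip hv hcv)

def annihilatedRange (e : V →ₗ[F] V) (S : Set (V →ₗ[F] V)) : Submodule F V :=
  range e ⊓ ⨅ (f) (_ : IsReachable e S f), ker f

section AnnihilatedRange

variable {e g : V →ₗ[F] V} {S : Set (V →ₗ[F] V)}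

theorem mem_annihilatedRange {x : V} :
    x ∈ annihilatedRange e S ↔ x ∈ range e ∧ ∀ f, IsReachable e S f → f x = 0 := by
  simp [annihilatedRange]

theorem range_le_annihilatedRange (hg : g ∈ S) (hR : ¬IsReachable e S g) :
    range g ≤ annihilatedRange e S := by
  rintro _ ⟨x, rfl⟩
  refine mem_annihilatedRange.2 ⟨?_, fun f hf => ?_⟩
  · exact not_not.1 (mt (IsReachable.of_not_range_le hg) hR) (mem_range_self g x)
  · exact LinearMap.congr_fun (not_not.1 (mt (hf.step hg) hR)) x

theorem apply_mem_annihilatedRange (hid : IsIdempotentElem e)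
    (hker : ∀ f, IsReachable e S f → ker e ≤ ker f) (hg : g ∈ insert e S) {x : V}
    (hx : x ∈ ker e ⊔ annihilatedRange e S) : g x ∈ annihilatedRange e S := by
  rcases hg with rfl | hg
  · obtain ⟨a, ha, b, hb, rfl⟩ := Submodule.mem_sup.1 hx
    rwa [map_add, mem_ker.1 ha, zero_add, hid.mem_range_iff.1 (mem_annihilatedRange.1 hb).1]
  by_cases hR : IsReachable e S g
  · have hgx : x ∈ ker g := sup_le (hker g hR) (fun y hy => (mem_annihilatedRange.1 hy).2 g hR) hx
    rw [mem_ker.1 hgx]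
    exact zero_mem _
  · exact range_le_annihilatedRange hg hR (mem_range_self g x)

end AnnihilatedRange

end

theorem stmt0 (F V : Type*) [Field F] [AddCommGroup V] [Module F V]
    [FiniteDimensional F V]
    (L : Submodule F (V →ₗ[F] V)) (e : V →ₗ[F] V) (he : e ∈ L)
    (hid : e ∘ₗ e = e)
    (hmax : ∀ h ∈ L, Module.finrank F (LinearMap.range h) ≤ Module.finrank F (LinearMap.range e))
    (S : Set (V →ₗ[F] V))
    (hS1 : ∀ f ∈ S, Module.finrank F (LinearMap.range f) = 1)
    (hspan : L = Submodule.span F (insert e S)) :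
    ∀ hs : List (V →ₗ[F] V), hs ≠ [] → (∀ f ∈ hs, f ∈ L) →
      ∀ v ∈ LinearMap.ker e, hs.prod v ∈ LinearMap.range e := by
  intro hs hne hmem v hv
  have hidem : IsIdempotentElem e := hid
  have hSL : S ⊆ L := hspan ▸ (Set.subset_insert e S).trans Submodule.subset_span
  have hker : ∀ f, IsReachable e S f → ker e ≤ ker f := by
    rintro _ ⟨k, c, hc, h0, rfl⟩
    exact ker_le_ker_of_isCompChain hidem he hSL hmax hS1 k c hc h0
  set U := ker e ⊔ annihilatedRange e S
  have hmaps : ∀ h ∈ L, ∀ x ∈ U, h x ∈ annihilatedRange e S := fun h hh x hx =>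
    apply_mem_of_mem_span (fun g hg => apply_mem_annihilatedRange hidem hker hg hx) (hspan ▸ hh)
  obtain ⟨h, t, rfl⟩ := List.exists_cons_of_ne_nil hne
  have ht : ∀ x ∈ U, t.prod x ∈ U :=
    List.prod_induction (fun g : V →ₗ[F] V => ∀ x ∈ U, g x ∈ U)
      (fun _ _ ha hb x hx => ha _ (hb x hx)) (fun _ hx => hx)
      fun g hg x hx => Submodule.mem_sup_right (hmaps g (hmem g (List.mem_cons_of_mem h hg)) x hx)
  have htv : t.prod v ∈ U := ht v (Submodule.mem_sup_left hv)
  rw [List.prod_cons, Module.End.mul_apply]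
  exact (mem_annihilatedRange.1 (hmaps h (hmem h List.mem_cons_self) _ htv)).1
end

section
/- Let U, V be finite-dimensional vector spaces over a field F and h, h'' : U → V linear maps. If h''(ker h) is not contained in h(U), then the set of scalars α ∈ F for which rank(h + α·h'') ≤ rank(h) has cardinality at most rank(h) + 1. In particular, if |F| > rank(h) + 1 there exists α with rank(h + α·h'') > rank(h). -/
/-!
Pick `u ∈ ker h` with `h'' u ∉ range h` and `x₁, …, x_r` such that the `h xᵢ` form a basis of
`range h`, and let `Q : V → F^{r+1}` send `h x₁, …, h x_r, h'' u` to the standard basis. The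
vectors `Q ((h + α h'') y)` for `y = x₁, …, x_r, u` are the rows of `A + α B`. Because `h u = 0`,
the last row of `A + X B` is `X e_{r+1}`, so `det (A + X B)` is `X` times a determinant with
constant term `1`: a nonzero polynomial of degree at most `r + 1`. Off its roots the `r + 1`
vectors `(h + α h'') y` are independent elements of `range (h + α h'')`.
-/

open Polynomial Matrix Module LinearMap

section

variable {F : Type*} [Field F]

theorem LinearIndependent.exists_linearMap_apply_eq_single {V ι : Type*} [AddCommGroup V]
    [Module F V] [DecidableEq ι] {v : ι → V} (hv : LinearIndependent F v) :
    ∃ Q : V →ₗ[F] ι → F, ∀ i, Q (v i) = Pi.single i 1 := by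
  obtain ⟨g, hg⟩ := LinearMap.exists_extend hv.repr
  refine ⟨Finsupp.lcoeFun ∘ₗ g, fun i => ?_⟩
  have hvi : v i ∈ Submodule.span F (Set.range v) := Submodule.subset_span ⟨i, rfl⟩
  have hgv : g (v i) = hv.repr ⟨v i, hvi⟩ := LinearMap.congr_fun hg ⟨v i, hvi⟩
  rw [LinearMap.comp_apply, hgv, hv.repr_eq_single i ⟨v i, hvi⟩ rfl]
  exact Finsupp.single_eq_pi_single i 1

theorem LinearMap.card_le_finrank_range_of_det_ne_zero {U V ι : Type*} [AddCommGroup U]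
    [Module F U] [AddCommGroup V] [Module F V] [FiniteDimensional F V] [Fintype ι]
    [DecidableEq ι] (g : U →ₗ[F] V) (y : ι → U) (Q : V →ₗ[F] ι → F)
    (hdet : det (Matrix.of fun j => Q (g (y j))) ≠ 0) :
    Fintype.card ι ≤ finrank F (range g) := by
  have hli : LinearIndependent F (g ∘ y) :=
    LinearIndependent.of_comp Q (linearIndependent_rows_of_det_ne_zero hdet)
  rw [← finrank_span_eq_card hli]
  exact Submodule.finrank_mono <|
    Submodule.span_le.2 (Set.range_subset_iff.2 fun j => mem_range_self g (y j))

theorem LinearMap.exists_linearIndependent_comp {U V : Type*} [AddCommGroup U]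
    [Module F U] [AddCommGroup V] [Module F V] [FiniteDimensional F V] (h : U →ₗ[F] V) :
    ∃ x : Fin (finrank F (range h)) → U, LinearIndependent F (h ∘ x) := by
  let b := finBasis F (range h)
  choose x hx using fun j => (b j).2
  refine ⟨x, ?_⟩
  rw [show h ∘ x = (range h).subtype ∘ b from funext hx]
  exact b.linearIndependent.map' _ (range h).ker_subtype

theorem Matrix.exists_finset_det_add_smul_ne_zero {ι : Type*} [Fintype ι] [DecidableEq ι]
    (A B : Matrix ι ι F) (hAB : det ((X : F[X]) • B.map C + A.map C) ≠ 0) :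
    ∃ s : Finset F, s.card ≤ Fintype.card ι ∧ ∀ α ∉ s, det (A + α • B) ≠ 0 := by
  classical
  set p := det ((X : F[X]) • B.map C + A.map C)
  refine ⟨p.roots.toFinset, ?_, fun α hα hdet => hα ?_⟩
  · calc _ ≤ Multiset.card p.roots := Multiset.toFinset_card_le _
      _ ≤ p.natDegree := card_roots' _
      _ ≤ _ := natDegree_det_X_add_C_le B A
  · have heval : (evalRingHom α).mapMatrix ((X : F[X]) • B.map C + A.map C) = A + α • B := by
      ext i j
      simp only [RingHom.mapMatrix_apply, map_apply, add_apply, smul_apply, smul_eq_mul,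
        coe_evalRingHom, eval_add, eval_mul, eval_X, eval_C]
      ring
    rw [Multiset.mem_toFinset, mem_roots hAB, IsRoot, ← coe_evalRingHom, RingHom.map_det, heval,
      hdet]

theorem Matrix.det_X_smul_add_ne_zero_of_row_eq_zero {ι : Type*} [Fintype ι] [DecidableEq ι]
    (A B : Matrix ι ι F) (L : ι) (hA : A L = 0) (hAB : det (A.updateRow L (B L)) ≠ 0) :
    det ((X : F[X]) • B.map C + A.map C) ≠ 0 := by
  set N : Matrix ι ι F[X] := (X : F[X]) • (B.updateRow L 0).map C + (A.updateRow L (B L)).map C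
  have hN : (X : F[X]) • B.map C + A.map C = N.updateRow L ((X : F[X]) • N L) := by
    ext i j
    by_cases hi : i = L
    · subst hi; simp [N, hA]
    · simp [N, hi]
  have hN0 : det N ≠ 0 := fun h0 => hAB <| by
    rw [← coeff_det_X_add_C_zero (B.updateRow L 0), h0, coeff_zero]
  rw [hN, det_updateRow_smul, updateRow_eq_self N L]
  exact mul_ne_zero X_ne_zero hN0

end

theorem stmt1_general (F U V : Type*) [Field F] [AddCommGroup U] [Module F U]
    [AddCommGroup V] [Module F V] [FiniteDimensional F V]
    (h h'' : U →ₗ[F] V)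
    (hne : ¬ (LinearMap.ker h).map h'' ≤ LinearMap.range h) :
    ∃ bad : Finset F, bad.card ≤ Module.finrank F (LinearMap.range h) + 1 ∧
      ∀ α : F, α ∉ bad →
        Module.finrank F (LinearMap.range h) <
          Module.finrank F (LinearMap.range (h + α • h'')) := by
  obtain ⟨_, ⟨u, hu, rfl⟩, hu''⟩ := SetLike.not_le_iff_exists.mp hne
  set r := finrank F (range h)
  obtain ⟨x, hx⟩ := h.exists_linearIndependent_comp
  have hv : LinearIndependent F (Fin.snoc (h ∘ x) (h'' u) : Fin (r + 1) → V) :=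
    linearIndependent_finSnoc.2 ⟨hx, fun hmem => hu'' <| Submodule.span_le.2
      (Set.range_subset_iff.2 fun j => mem_range_self h (x j)) hmem⟩
  obtain ⟨Q, hQ⟩ := hv.exists_linearMap_apply_eq_single
  let y : Fin (r + 1) → U := Fin.snoc x u
  let A : Matrix (Fin (r + 1)) (Fin (r + 1)) F := .of fun j => Q (h (y j))
  let B : Matrix (Fin (r + 1)) (Fin (r + 1)) F := .of fun j => Q (h'' (y j))
  have hA : A (Fin.last r) = 0 := by
    ext j
    simp [A, y, show h u = 0 from hu]
  have hAB : A.updateRow (Fin.last r) (B (Fin.last r)) = 1 := by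
    ext i j
    rw [one_eq_pi_single, ← hQ i]
    refine Fin.lastCases ?_ (fun i => ?_) i
    · simp [A, B, y]
    · simp [A, B, y]
  obtain ⟨bad, hcard, hbad⟩ := exists_finset_det_add_smul_ne_zero A B
    (det_X_smul_add_ne_zero_of_row_eq_zero A B _ hA (by simp [hAB]))
  refine ⟨bad, by simpa using hcard, fun α hα => ?_⟩
  have hrank := (h + α • h'').card_le_finrank_range_of_det_ne_zero y Q (by
    convert hbad α hα using 2; ext i j; simp [A, B])
  simpa using hrank

theorem stmt1 (F U V : Type*) [Field F] [AddCommGroup U] [Module F U]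
    [AddCommGroup V] [Module F V] [FiniteDimensional F U] [FiniteDimensional F V]
    (h h'' : U →ₗ[F] V)
    (hne : ¬ (LinearMap.ker h).map h'' ≤ LinearMap.range h) :
    ∃ bad : Finset F, bad.card ≤ Module.finrank F (LinearMap.range h) + 1 ∧
      ∀ α : F, α ∉ bad →
        Module.finrank F (LinearMap.range h) <
          Module.finrank F (LinearMap.range (h + α • h'')) :=
  stmt1_general F U V h h'' hne
end

section
/- Let U, V be finite-dimensional vector spaces over a field F with dim U = dim V, let L ≤ Lin(U,V) be a linear subspace spanned by an element h and some rank-one maps, and let g : V → U be an invertible linear map such that gh is idempotent. If Env(gL)·ker(gh) ⊆ gh(U), then h has maximum rank among elements of L; moreover there exists a subspace W ≤ U with rank(h) = dim U − (dim W − dim(L·W)). -/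
/-!
Put `E := g ∘ h`, an idempotent, so `U = im E ⊕ ker E`, and `N := Env(gL)·ker E` (`envSpan`).
The hypothesis says `N ≤ im E`, while `m(ker E ⊔ N) ≤ N` for every `m ∈ gL` by construction.
Hence `im m ≤ m(im E) + N`, and since `m` maps `N` into itself, the map `im E × N → U`,
`(a, n) ↦ m a + n`, whose image is `m(im E) + N`, vanishes on the `dim N`-dimensional subspace
`{(n, -m n)}`; so `rank m ≤ dim im E = rank h`. For `W := ker E ⊕ N` one has
`g(L·W) = gL·W = N`, so `dim W - dim L·W = dim ker E = dim U - rank h`.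
-/

open Module Submodule

section

variable {F U V : Type*} [Field F] [AddCommGroup U] [Module F U] [AddCommGroup V] [Module F V]

namespace Submodule

theorem finrank_map_sup_le [FiniteDimensional F U] {m : Module.End F U} {A N : Submodule F U}
    (hNA : N ≤ A) (hmN : N.map m ≤ N) : finrank F ↥(A.map m ⊔ N) ≤ finrank F A := by
  let τ : (A × N) →ₗ[F] U := (m ∘ₗ A.subtype).coprod N.subtype
  have hτ : LinearMap.range τ = A.map m ⊔ N := by
    rw [LinearMap.range_coprod, LinearMap.range_comp, range_subtype, range_subtype]
  let ψ : N →ₗ[F] (A × N) :=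
    (inclusion hNA).prod (-(m.restrict fun n hn => hmN (mem_map_of_mem hn)))
  have hψ : LinearMap.range ψ ≤ LinearMap.ker τ := by
    rintro _ ⟨n, rfl⟩
    simp [τ, ψ]
  have hψinj : Function.Injective ψ := fun x y hxy =>
    inclusion_injective hNA (congrArg Prod.fst hxy)
  have hker : finrank F N ≤ finrank F (LinearMap.ker τ) :=
    (LinearMap.finrank_range_of_inj hψinj).symm.le.trans (finrank_mono hψ)
  have := LinearMap.finrank_range_add_finrank_ker τ
  rw [Module.finrank_prod, hτ] at this
  omega

theorem finrank_range_le_of_sup_eq_top [FiniteDimensional F U] {m : Module.End F U}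
    {A B N : Submodule F U} (hAB : A ⊔ B = ⊤) (hNA : N ≤ A) (hm : (B ⊔ N).map m ≤ N) :
    finrank F (LinearMap.range m) ≤ finrank F A := by
  have hrange : LinearMap.range m ≤ A.map m ⊔ N := by
    rw [LinearMap.range_eq_map, ← hAB, Submodule.map_sup]
    exact sup_le_sup_left ((map_mono le_sup_left).trans hm) _
  exact (finrank_mono hrange).trans (finrank_map_sup_le hNA ((map_mono le_sup_right).trans hm))

end Submodule

theorem LinearEquiv.finrank_range_comp {W : Type*} [AddCommGroup W] [Module F W]
    (e : V ≃ₗ[F] U) (f : W →ₗ[F] V) :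
    finrank F (LinearMap.range (e.toLinearMap ∘ₗ f)) = finrank F (LinearMap.range f) := by
  rw [LinearMap.range_comp]
  exact e.finrank_map_eq _

def applySpan (L : Set (U →ₗ[F] V)) (W : Submodule F U) : Submodule F V :=
  span F {v | ∃ f ∈ L, ∃ w ∈ W, v = f w}

theorem map_applySpan (G : V →ₗ[F] U) (L : Set (U →ₗ[F] V)) (W : Submodule F U) :
    (applySpan L W).map G = applySpan {f | ∃ f' ∈ L, f = G ∘ₗ f'} W := by
  rw [applySpan, applySpan, Submodule.map_span]
  congr 1
  ext u
  constructor
  · rintro ⟨_, ⟨f, hf, w, hw, rfl⟩, rfl⟩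
    exact ⟨G ∘ₗ f, ⟨f, hf, rfl⟩, w, hw, rfl⟩
  · rintro ⟨_, ⟨f, hf, rfl⟩, w, hw, rfl⟩
    exact ⟨f w, ⟨f, hf, w, hw, rfl⟩, rfl⟩

section envSpan

variable (M : Set (Module.End F U)) (B : Submodule F U)

def envSpan : Submodule F U :=
  span F {u | ∃ hs : List (Module.End F U), hs ≠ [] ∧ (∀ f ∈ hs, f ∈ M) ∧
    ∃ b ∈ B, u = hs.prod b}

variable {M B}

theorem list_prod_apply_mem_sup_envSpan {hs : List (Module.End F U)} (hM : ∀ f ∈ hs, f ∈ M)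
    {b : U} (hb : b ∈ B) : hs.prod b ∈ B ⊔ envSpan M B := by
  rcases eq_or_ne hs [] with rfl | hne
  · exact mem_sup_left hb
  · exact mem_sup_right (subset_span ⟨hs, hne, hM, b, hb, rfl⟩)

theorem map_sup_envSpan_le {m : Module.End F U} (hm : m ∈ M) :
    (B ⊔ envSpan M B).map m ≤ envSpan M B := by
  rw [Submodule.map_sup, sup_le_iff, envSpan, Submodule.map_span, map_le_iff_le_comap]
  constructor
  · exact fun b hb => subset_span ⟨[m], by simp, by simpa using hm, b, hb, by simp⟩
  · refine span_mono ?_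
    rintro _ ⟨_, ⟨hs, -, hM, b, hb, rfl⟩, rfl⟩
    exact ⟨m :: hs, by simp, by simpa using ⟨hm, hM⟩, b, hb, by simp⟩

theorem envSpan_eq_applySpan : envSpan M B = applySpan M (B ⊔ envSpan M B) := by
  apply le_antisymm
  · rw [envSpan, span_le]
    rintro _ ⟨_ | ⟨m, hs⟩, hne, hM, b, hb, rfl⟩
    · exact absurd rfl hne
    · exact subset_span ⟨m, hM m (by simp), hs.prod b,
        list_prod_apply_mem_sup_envSpan (fun f hf => hM f (by simp [hf])) hb, by simp⟩
  · rw [applySpan, span_le]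
    rintro _ ⟨m, hm, w, hw, rfl⟩
    exact map_sup_envSpan_le hm (mem_map_of_mem hw)

end envSpan

end

theorem stmt3_general (F U V : Type*) [Field F] [AddCommGroup U] [Module F U]
    [AddCommGroup V] [Module F V] [FiniteDimensional F U]
    (L : Submodule F (U →ₗ[F] V)) (h : U →ₗ[F] V)
    (g : V ≃ₗ[F] U)
    (hidem : (g.toLinearMap ∘ₗ h) ∘ₗ (g.toLinearMap ∘ₗ h) = g.toLinearMap ∘ₗ h)
    (henv : ∀ hs : List (U →ₗ[F] U), hs ≠ [] →
        (∀ f ∈ hs, ∃ f' ∈ L, f = g.toLinearMap ∘ₗ f') →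
        ∀ v ∈ LinearMap.ker (g.toLinearMap ∘ₗ h),
          hs.prod v ∈ LinearMap.range (g.toLinearMap ∘ₗ h)) :
    (∀ h' ∈ L, Module.finrank F (LinearMap.range h') ≤ Module.finrank F (LinearMap.range h)) ∧
    ∃ W : Submodule F U,
      (Module.finrank F (LinearMap.range h) : ℤ) =
        (Module.finrank F U : ℤ) -
          ((Module.finrank F W : ℤ) -
            (Module.finrank F (Submodule.span F {v : V | ∃ f ∈ L, ∃ w ∈ W, v = f w}) : ℤ)) := by
  set E := g.toLinearMap ∘ₗ h
  set M : Set (Module.End F U) := {f | ∃ f' ∈ (L : Set (U →ₗ[F] V)), f = g.toLinearMap ∘ₗ f'}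
  set N := envSpan M (LinearMap.ker E)
  have hcompl : IsCompl (LinearMap.range E) (LinearMap.ker E) :=
    LinearMap.IsIdempotentElem.isCompl hidem
  have hNA : N ≤ LinearMap.range E :=
    span_le.2 fun _ ⟨hs, hne, hM, b, hb, hu⟩ => hu ▸ henv hs hne hM b hb
  refine ⟨fun h' hh' => ?_, LinearMap.ker E ⊔ N, ?_⟩
  · rw [← g.finrank_range_comp h', ← g.finrank_range_comp h]
    exact finrank_range_le_of_sup_eq_top hcompl.sup_eq_top hNA
      (map_sup_envSpan_le ⟨h', hh', rfl⟩)
  · have hLW : finrank F (span F {v : V | ∃ f ∈ L, ∃ w ∈ LinearMap.ker E ⊔ N, v = f w}) =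
        finrank F N := by
      rw [← g.finrank_map_eq]
      exact congrArg (fun W : Submodule F U => finrank F W)
        ((map_applySpan _ _ _).trans envSpan_eq_applySpan.symm)
    have hW := finrank_sup_add_finrank_inf_eq (LinearMap.ker E) N
    rw [(hcompl.disjoint.mono_left hNA).symm.eq_bot, finrank_bot] at hW
    have hU := finrank_add_eq_of_isCompl hcompl
    have hA : finrank F (LinearMap.range E) = finrank F (LinearMap.range h) :=
      g.finrank_range_comp h
    omega

theorem stmt3 (F U V : Type*) [Field F] [AddCommGroup U] [Module F U]
    [AddCommGroup V] [Module F V] [FiniteDimensional F U] [FiniteDimensional F V]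
    (hdim : Module.finrank F U = Module.finrank F V)
    (L : Submodule F (U →ₗ[F] V)) (h : U →ₗ[F] V) (hh : h ∈ L)
    (S : Set (U →ₗ[F] V))
    (hS1 : ∀ f ∈ S, Module.finrank F (LinearMap.range f) = 1)
    (hspan : L = Submodule.span F (insert h S))
    (g : V ≃ₗ[F] U)
    (hidem : (g.toLinearMap ∘ₗ h) ∘ₗ (g.toLinearMap ∘ₗ h) = g.toLinearMap ∘ₗ h)
    (henv : ∀ hs : List (U →ₗ[F] U), hs ≠ [] →
        (∀ f ∈ hs, ∃ f' ∈ L, f = g.toLinearMap ∘ₗ f') →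
        ∀ v ∈ LinearMap.ker (g.toLinearMap ∘ₗ h),
          hs.prod v ∈ LinearMap.range (g.toLinearMap ∘ₗ h)) :
    (∀ h' ∈ L, Module.finrank F (LinearMap.range h') ≤ Module.finrank F (LinearMap.range h)) ∧
    ∃ W : Submodule F U,
      (Module.finrank F (LinearMap.range h) : ℤ) =
        (Module.finrank F U : ℤ) -
          ((Module.finrank F W : ℤ) -
            (Module.finrank F (Submodule.span F {v : V | ∃ f ∈ L, ∃ w ∈ W, v = f w}) : ℤ)) :=
  stmt3_general F U V L h g hidem henv
end

section
/- Let V be a finite-dimensional vector space over a field F, L ≤ End(V) a subspace, and e ∈ L idempotent of maximal rank in L. Suppose L is spanned by e and rank-one maps, and suppose for contradiction there exist rank-one maps h₁,…,hₛ ∈ L and v₀ ∈ ker e with vᵢ := hᵢvᵢ₋₁ satisfying: v₀,…,vₛ linearly independent, v₁,…,vₛ₋₁ ∈ e(V), vₛ ∉ e(V), hᵢ(V) = F·vᵢ for each i, and hⱼvᵢ₋₁ = 0 for all 1 ≤ i < j ≤ s. Then the element a := e + h₁ + ⋯ + hₛ satisfies rank(a) ≥ rank(e) + 1. -/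
theorem stmt4 (F V : Type*) [Field F] [AddCommGroup V] [Module F V]
    [FiniteDimensional F V]
    (L : Submodule F (V →ₗ[F] V))
    (e : V →ₗ[F] V) (he : e ∈ L) (hid : e ∘ₗ e = e)
    (hmax : ∀ f ∈ L, Module.finrank F (LinearMap.range f) ≤ Module.finrank F (LinearMap.range e))
    (S : Set (V →ₗ[F] V))
    (hS1 : ∀ f ∈ S, Module.finrank F (LinearMap.range f) = 1)
    (hspan : L = Submodule.span F (insert e S))
    (s : ℕ) (hs : 1 ≤ s)
    (h : Fin s → (V →ₗ[F] V)) (hhL : ∀ i, h i ∈ L)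
    (v : Fin (s + 1) → V)
    (hrank1 : ∀ i : Fin s, LinearMap.range (h i) = Submodule.span F {v i.succ})
    (hstep : ∀ i : Fin s, v i.succ = h i (v i.castSucc))
    (hker : v 0 ∈ LinearMap.ker e)
    (hindep : LinearIndependent F v)
    (hmid : ∀ i : Fin (s + 1), 0 < (i : ℕ) → (i : ℕ) < s → v i ∈ LinearMap.range e)
    (hlast : v (Fin.last s) ∉ LinearMap.range e)
    (hzero : ∀ i j : Fin s, i < j → h j (v i.castSucc) = 0) :
    Module.finrank F (LinearMap.range e) + 1 ≤
      Module.finrank F (LinearMap.range (e + ∑ i, h i)) := by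
  classical
  haveI : NeZero s := ⟨by omega⟩
  set a : V →ₗ[F] V := e + ∑ i, h i with ha
  have hv0 : v 0 ≠ 0 := hindep.ne_zero 0
  have hvne : ∀ j : Fin (s + 1), v j ≠ 0 := fun j => hindep.ne_zero j
  have h0c : ((0 : Fin s).castSucc) = (0 : Fin (s + 1)) := Fin.ext (by simp)
  -- key lemma
  have key : ∀ (x : V) (μ : F), a x = 0 → x - e x = μ • v 0 → x = 0 := by
    intro x μ hax hxe
    set y := e x with hy
    have hxy : x = y + μ • v 0 := by rw [← hxe, hy]; abel
    have hyr : y ∈ LinearMap.range e := ⟨x, rfl⟩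
    -- values of h i on v 0
    have hhv0 : ∀ i : Fin s, i ≠ 0 → h i (v 0) = 0 := by
      intro i hi
      have hi' : (i : ℕ) ≠ 0 := fun hh => hi (Fin.ext (by simp [hh]))
      have hpos : (0 : Fin s) < i := by
        rw [Fin.lt_def, Fin.val_zero]
        omega
      have := hzero 0 i hpos
      rwa [h0c] at this
    have hh00 : h 0 (v 0) = v (Fin.succ 0) := by rw [hstep 0, h0c]
    -- master equation
    have master : y + ((∑ i : Fin s, h i y) + μ • v (Fin.succ 0)) = 0 := by
      have h2 : ∀ i : Fin s, h i x = h i y + μ • h i (v 0) := by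
        intro i; rw [hxy, map_add, map_smul]
      have hsum0 : ∑ i : Fin s, h i (v 0) = v (Fin.succ 0) := by
        rw [Finset.sum_eq_single 0 (fun b _ hb => hhv0 b hb)
          (fun habs => (habs (Finset.mem_univ _)).elim), hh00]
      have h3 : ∑ i : Fin s, h i x = (∑ i : Fin s, h i y) + μ • v (Fin.succ 0) := by
        rw [Finset.sum_congr rfl (fun i _ => h2 i), Finset.sum_add_distrib,
          ← Finset.smul_sum, hsum0]
      have h4 : a x = e x + ∑ i : Fin s, h i x := by
        simp [ha, LinearMap.add_apply, LinearMap.sum_apply]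
      rw [h4, h3, ← hy, ← add_assoc] at hax
      rw [add_assoc] at hax
      exact hax
    -- coefficients c
    have hc : ∀ i : Fin s, ∃ ci : F, ci • v i.succ = h i y := by
      intro i
      have hmem : h i y ∈ LinearMap.range (h i) := ⟨y, rfl⟩
      rw [hrank1 i] at hmem
      exact Submodule.mem_span_singleton.mp hmem
    choose c hcs using hc
    -- coefficients b for y
    set b : Fin (s + 1) → F :=
      fun j => Fin.cases 0 (fun i => -(c i + (if i = 0 then μ else 0))) j with hb
    have hb0 : b 0 = 0 := by simp [hb]
    have hbs : ∀ i : Fin s, b i.succ = -(c i + (if i = 0 then μ else 0)) := by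
      intro i; simp [hb]
    have hδ : ∑ i : Fin s, (if i = 0 then μ else 0) • v i.succ = μ • v (Fin.succ 0) := by
      rw [Finset.sum_eq_single 0 (fun k _ hk => by rw [if_neg hk, zero_smul])
        (fun habs => (habs (Finset.mem_univ _)).elim), if_pos rfl]
    have hyb : y = ∑ j : Fin (s + 1), b j • v j := by
      have hrhs : ∑ j : Fin (s + 1), b j • v j
          = -(∑ i : Fin s, h i y) - μ • v (Fin.succ 0) := by
        rw [Fin.sum_univ_succ, hb0, zero_smul, zero_add]
        have hterm : ∀ i : Fin s, b i.succ • v i.succ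
            = -(c i • v i.succ) - (if i = 0 then μ else 0) • v i.succ := by
          intro i; rw [hbs i]; module
        rw [Finset.sum_congr rfl (fun i _ => hterm i), Finset.sum_sub_distrib, hδ]
        have hneg : ∑ i : Fin s, -(c i • v i.succ) = -∑ i : Fin s, h i y := by
          rw [Finset.sum_neg_distrib]
          exact congrArg Neg.neg (Finset.sum_congr rfl fun i _ => hcs i)
        rw [hneg]
      have hm := eq_neg_of_add_eq_zero_left master
      rw [neg_add, ← sub_eq_add_neg] at hm
      rw [hrhs]
      exact hm
    -- b at the last index vanishes
    have hblast : b (Fin.last s) = 0 := by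
      by_contra hbl
      apply hlast
      have hmem : b (Fin.last s) • v (Fin.last s) ∈ LinearMap.range e := by
        have hsplit : b (Fin.last s) • v (Fin.last s)
            = y - ∑ j ∈ Finset.univ.erase (Fin.last s), b j • v j := by
          rw [hyb, ← Finset.add_sum_erase _ _ (Finset.mem_univ (Fin.last s))]
          abel
        rw [hsplit]
        refine Submodule.sub_mem _ hyr (Submodule.sum_mem _ ?_)
        intro j hj
        rcases eq_or_ne j 0 with rfl | hj0
        · rw [hb0, zero_smul]; exact Submodule.zero_mem _
        · have hjne : j ≠ Fin.last s := (Finset.mem_erase.mp hj).1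
          have hjval : (j : ℕ) ≠ s := fun hh => hjne (Fin.ext (by simp [hh]))
          have hjpos : (0 : ℕ) < (j : ℕ) := by
            rcases Nat.eq_zero_or_pos (j : ℕ) with hz | hp
            · exact absurd (Fin.ext (by simp [hz]) : j = 0) hj0
            · exact hp
          have hjlt : (j : ℕ) < s := by have := j.isLt; omega
          exact Submodule.smul_mem _ _ (hmid j hjpos hjlt)
      have h2 := Submodule.smul_mem _ (b (Fin.last s))⁻¹ hmem
      rwa [smul_smul, inv_mul_cancel₀ hbl, one_smul] at h2
    -- the downward induction step
    have step : ∀ i : Fin s, (∀ k : Fin s, i < k → b k.castSucc = 0) →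
        b i.castSucc + (if i = 0 then μ else 0) = 0 := by
      intro i H
      have hiy : h i y = b i.castSucc • v i.succ := by
        have e1 : h i y = ∑ j : Fin (s + 1), b j • h i (v j) := by
          rw [hyb, map_sum]
          exact Finset.sum_congr rfl fun j _ => map_smul _ _ _
        have e2 : ∑ k : Fin s, b k.castSucc • h i (v k.castSucc)
            = b i.castSucc • h i (v i.castSucc) := by
          refine Finset.sum_eq_single i (fun k _ hk => ?_)
            (fun habs => (habs (Finset.mem_univ _)).elim)
          rcases lt_or_gt_of_ne hk with hlt | hgt
          · rw [hzero k i hlt, smul_zero]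
          · rw [H k hgt, zero_smul]
        rw [e1, Fin.sum_univ_castSucc, hblast, zero_smul, add_zero, e2, ← hstep i]
      have h3 : b i.castSucc = c i := by
        have h2 : (b i.castSucc - c i) • v i.succ = 0 := by
          rw [sub_smul, hcs i, ← hiy, sub_self]
        rcases smul_eq_zero.mp h2 with hz | hz
        · exact sub_eq_zero.mp hz
        · exact absurd hz (hvne _)
      have h4 : b i.succ = 0 := by
        by_cases hi : (i : ℕ) + 1 = s
        · have : i.succ = Fin.last s := Fin.ext (by simp [hi])
          rw [this, hblast]
        · have hlt : (i : ℕ) + 1 < s := by have := i.isLt; omega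
          have hik : i.succ = (⟨(i : ℕ) + 1, hlt⟩ : Fin s).castSucc := Fin.ext rfl
          rw [hik]
          exact H _ (by simp [Fin.lt_def])
      have h5 := hbs i
      rw [h4] at h5
      rw [h3]
      exact neg_eq_zero.mp h5.symm
    -- all coefficients on castSucc indices vanish
    have step' : ∀ i : Fin s, (∀ k : Fin s, i < k → b k.castSucc = 0) →
        b i.castSucc = 0 := by
      intro i H
      rcases eq_or_ne i 0 with rfl | hne
      · rw [h0c]; exact hb0
      · have := step i H
        rwa [if_neg hne, add_zero] at this
    have allzero : ∀ n : ℕ, ∀ i : Fin s, s ≤ (i : ℕ) + n + 1 → b i.castSucc = 0 := by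
      intro n
      induction n with
      | zero =>
        intro i hi
        refine step' i (fun k hk => ?_)
        exact absurd (Fin.lt_def.mp hk) (by have := k.isLt; omega)
      | succ n ih =>
        intro i hi
        refine step' i (fun k hk => ?_)
        exact ih k (by have := Fin.lt_def.mp hk; omega)
    have allb : ∀ i : Fin s, b i.castSucc = 0 := fun i => allzero s i (by omega)
    have hμ : μ = 0 := by
      have := step 0 (fun k _ => allb k)
      rw [if_pos rfl, h0c, hb0, zero_add] at this
      exact this
    have hball : ∀ j : Fin (s + 1), b j = 0 := by
      intro j
      refine Fin.lastCases hblast (fun k => allb k) j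
    have hy0 : y = 0 := by
      rw [hyb]
      exact Finset.sum_eq_zero fun j _ => by rw [hball j, zero_smul]
    rw [hxy, hy0, hμ, zero_smul, add_zero]
  -- dimension count
  have hker_le : Module.finrank F (LinearMap.ker a) + 1
      ≤ Module.finrank F (LinearMap.ker e) := by
    set φ : LinearMap.ker a →ₗ[F] V :=
      (LinearMap.id - e) ∘ₗ (LinearMap.ker a).subtype with hφ
    have hφapp : ∀ x : LinearMap.ker a, φ x = (x : V) - e x := fun x => rfl
    have hφinj : Function.Injective φ := by
      rw [← LinearMap.ker_eq_bot, Submodule.eq_bot_iff]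
      intro x hx
      have hx' : (x : V) - e x = 0 := hx
      have := key x 0 x.2 (by rw [hx', zero_smul])
      exact Subtype.ext this
    have hrange_le : LinearMap.range φ ⊔ Submodule.span F {v 0} ≤ LinearMap.ker e := by
      apply sup_le
      · rintro _ ⟨x, rfl⟩
        rw [LinearMap.mem_ker, hφapp, map_sub]
        have := LinearMap.congr_fun hid (x : V)
        simp only [LinearMap.comp_apply] at this
        rw [this, sub_self]
      · rw [Submodule.span_le, Set.singleton_subset_iff]
        exact hker
    have hdisj : LinearMap.range φ ⊓ Submodule.span F {v 0} = ⊥ := by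
      rw [Submodule.eq_bot_iff]
      rintro u ⟨⟨x, rfl⟩, hu2⟩
      obtain ⟨μ, hμ⟩ := Submodule.mem_span_singleton.mp hu2
      have hx0 : (x : V) = 0 := key x μ x.2 ((hφapp x).symm.trans hμ.symm)
      rw [hφapp, hx0, map_zero, sub_zero]
    have h1 : Module.finrank F (LinearMap.range φ)
        = Module.finrank F (LinearMap.ker a) :=
      LinearMap.finrank_range_of_inj hφinj
    have h2 := Submodule.finrank_sup_add_finrank_inf_eq
      (LinearMap.range φ) (Submodule.span F {v 0})
    rw [hdisj] at h2
    have h3 : Module.finrank F (Submodule.span F {v 0}) = 1 :=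
      finrank_span_singleton hv0
    have h4 : Module.finrank F ↥(LinearMap.range φ ⊔ Submodule.span F {v 0})
        ≤ Module.finrank F (LinearMap.ker e) := Submodule.finrank_mono hrange_le
    simp only [finrank_bot] at h2
    omega
  have ra := LinearMap.finrank_range_add_finrank_ker a
  have re := LinearMap.finrank_range_add_finrank_ker e
  omega
end

section
/- Let U, V be finite-dimensional F-vector spaces, L ≤ Lin(U,V) a subspace, and let W = L ⊕ V be regarded as a module over the set S = {μ_u : u ∈ U} where μ_u acts by μ_u(h, v) = (0, h(u)). Then for any (h, v) ∈ W with h ≠ 0, the S-submodule of W generated by (h, v) equals F·(h,v) + (0 ⊕ h(U)), and its dimension is 1 + rank(h). -/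
/-!
Every `μ u` sends `F ∙ (h, v) ⊔ (0 ⊕ range h)` into `0 ⊕ range h`, so this submodule is invariant,
and any invariant submodule containing `(h, v)` contains all `μ u (h, v) = (0, h u)`; hence it is the
generated one. Its two summands meet trivially because `h ≠ 0`, which gives the dimension.
-/

open Submodule

section ProdBot

variable {K M₁ M₂ : Type*} [DivisionRing K] [AddCommGroup M₁] [Module K M₁]
  [AddCommGroup M₂] [Module K M₂]

theorem finrank_prod_bot (P : Submodule K M₂) :
    Module.finrank K ((⊥ : Submodule K M₁).prod P) = Module.finrank K P := by
  rw [← map_inr]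
  exact (P.equivMapOfInjective _ LinearMap.inr_injective).symm.finrank_eq

theorem disjoint_span_singleton_prod_bot {x : M₁ × M₂} (hx : x.1 ≠ 0) (P : Submodule K M₂) :
    Disjoint (K ∙ x) ((⊥ : Submodule K M₁).prod P) := by
  rw [disjoint_iff_inf_le]
  rintro _ ⟨hspan, hprod⟩
  obtain ⟨a, rfl⟩ := mem_span_singleton.mp hspan
  have ha : a • x.1 = 0 := (mem_bot K).mp hprod.1
  simp [(smul_eq_zero.mp ha).resolve_right hx]

theorem finrank_span_singleton_sup_prod_bot {x : M₁ × M₂} (hx : x.1 ≠ 0)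
    (P : Submodule K M₂) [FiniteDimensional K P] :
    Module.finrank K ↥((K ∙ x) ⊔ (⊥ : Submodule K M₁).prod P) = 1 + Module.finrank K P := by
  have : FiniteDimensional K ↥((⊥ : Submodule K M₁).prod P) := by
    rw [← map_inr]; infer_instance
  have hsum := Submodule.finrank_sup_add_finrank_inf_eq (K ∙ x) ((⊥ : Submodule K M₁).prod P)
  rw [(disjoint_span_singleton_prod_bot hx P).eq_bot, finrank_bot, add_zero,
    finrank_span_singleton (fun h0 => hx (by rw [h0]; rfl)), finrank_prod_bot] at hsum
  exact hsum

end ProdBot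

section EvalAction

variable {R U V : Type*} [CommSemiring R] [AddCommMonoid U] [Module R U] [AddCommMonoid V]
  [Module R V]
  {L : Submodule R (U →ₗ[R] V)} {μ : U → (L × V) →ₗ[R] L × V}

theorem prod_bot_range_le_of_mem (hμ : ∀ u p, μ u p = (0, (p.1 : U →ₗ[R] V) u))
    {N : Submodule R (L × V)} (hinv : ∀ u, N.map (μ u) ≤ N) {p : L × V} (hp : p ∈ N) :
    (⊥ : Submodule R L).prod (LinearMap.range (p.1 : U →ₗ[R] V)) ≤ N := by
  rintro ⟨a, w⟩ ⟨ha, u, rfl⟩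
  obtain rfl : a = 0 := (mem_bot R).mp ha
  rw [← hμ]
  exact hinv u ⟨p, hp, rfl⟩

theorem map_span_singleton_sup_prod_bot_range_le (hμ : ∀ u p, μ u p = (0, (p.1 : U →ₗ[R] V) u))
    (p : L × V) (u : U) :
    ((R ∙ p) ⊔ (⊥ : Submodule R L).prod (LinearMap.range (p.1 : U →ₗ[R] V))).map (μ u) ≤
      (R ∙ p) ⊔ (⊥ : Submodule R L).prod (LinearMap.range (p.1 : U →ₗ[R] V)) := by
  rintro _ ⟨q, hq, rfl⟩
  obtain ⟨_, hs, t, ⟨ht, -⟩, rfl⟩ := mem_sup.mp hq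
  obtain ⟨a, rfl⟩ := mem_span_singleton.mp hs
  obtain ⟨t₁, t₂⟩ := t
  obtain rfl : t₁ = 0 := (mem_bot R).mp ht
  rw [hμ]
  exact mem_sup_right ⟨zero_mem _, a • u, by simp⟩

end EvalAction

theorem stmt5_general (F U V : Type*) [Field F] [AddCommGroup U] [Module F U]
    [AddCommGroup V] [Module F V] [FiniteDimensional F U]
    (L : Submodule F (U →ₗ[F] V))
    (μ : U → ((L × V) →ₗ[F] (L × V)))
    (hμ : ∀ (u : U) (p : L × V), μ u p = (0, (p.1 : U →ₗ[F] V) u))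
    (h : U →ₗ[F] V) (hL : h ∈ L) (hne : h ≠ 0) (v : V)
    (N : Submodule F (L × V))
    (hmem : ((⟨h, hL⟩, v) : L × V) ∈ N)
    (hinv : ∀ u : U, N.map (μ u) ≤ N)
    (hmin : ∀ N' : Submodule F (L × V),
        ((⟨h, hL⟩, v) : L × V) ∈ N' → (∀ u : U, N'.map (μ u) ≤ N') → N ≤ N') :
    N = Submodule.span F {((⟨h, hL⟩, v) : L × V)} ⊔
          Submodule.prod (⊥ : Submodule F L) (LinearMap.range h) ∧
    Module.finrank F N = 1 + Module.finrank F (LinearMap.range h) := by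
  set x : L × V := (⟨h, hL⟩, v)
  have hN : N = (F ∙ x) ⊔ (⊥ : Submodule F L).prod (LinearMap.range h) :=
    le_antisymm
      (hmin _ (mem_sup_left (mem_span_singleton_self x))
        (map_span_singleton_sup_prod_bot_range_le hμ x))
      (sup_le ((span_singleton_le_iff_mem x N).mpr hmem)
        (prod_bot_range_le_of_mem hμ hinv hmem))
  have hx : x.1 ≠ 0 := fun h0 => hne (congrArg Subtype.val h0)
  refine ⟨hN, ?_⟩
  rw [hN]
  exact finrank_span_singleton_sup_prod_bot hx _

theorem stmt5 (F U V : Type*) [Field F] [AddCommGroup U] [Module F U]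
    [AddCommGroup V] [Module F V] [FiniteDimensional F U] [FiniteDimensional F V]
    (L : Submodule F (U →ₗ[F] V))
    (μ : U → ((L × V) →ₗ[F] (L × V)))
    (hμ : ∀ (u : U) (p : L × V), μ u p = (0, (p.1 : U →ₗ[F] V) u))
    (h : U →ₗ[F] V) (hL : h ∈ L) (hne : h ≠ 0) (v : V)
    (N : Submodule F (L × V))
    (hmem : ((⟨h, hL⟩, v) : L × V) ∈ N)
    (hinv : ∀ u : U, N.map (μ u) ≤ N)
    (hmin : ∀ N' : Submodule F (L × V),
        ((⟨h, hL⟩, v) : L × V) ∈ N' → (∀ u : U, N'.map (μ u) ≤ N') → N ≤ N') :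
    N = Submodule.span F {((⟨h, hL⟩, v) : L × V)} ⊔
          Submodule.prod (⊥ : Submodule F L) (LinearMap.range h) ∧
    Module.finrank F N = 1 + Module.finrank F (LinearMap.range h) :=
  stmt5_general F U V L μ hμ h hL hne v N hmem hinv hmin
end

section
/- Let A be a semisimple F-algebra with, as a left module over itself, A ≅ ⨁ᵢ₌₁ᵗ Vᵢ^{mᵢ} where the Vᵢ are pairwise non-isomorphic simple A-modules, and let V be a finite-dimensional A-module with V ≅ ⨁ᵢ₌₁ᵗ Vᵢ^{sᵢ}. Then for every positive integer ℓ and every A-submodule U of V generated by ℓ elements, U is isomorphic to a submodule of ⨁ᵢ₌₁ᵗ Vᵢ^{min(sᵢ, ℓmᵢ)}; in particular dim U ≤ Σᵢ min(sᵢ, ℓmᵢ)·dim Vᵢ. -/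
/-!
Over the semisimple ring `A` the finitely generated module `U` is a finite direct sum of simple
modules. Each of them embeds into `M ≅ ⨁ Vᵢ^{sᵢ}`, so by Schur's lemma it is isomorphic to some
`Vᵢ`, and `U ≅ ⨁ Vᵢ^{cᵢ}`. Besides `U ⊆ M`, the surjection `A^ℓ → U` splits, so `U` also embeds into
`A^ℓ ≅ ⨁ Vᵢ^{ℓmᵢ}`. In an injective map `⨁ Vⱼ^{pⱼ} → ⨁ Vⱼ^{qⱼ}` the off-diagonal blocks vanish by
Schur's lemma, so the diagonal blocks are injective and comparing lengths gives `pᵢ ≤ qᵢ`; hence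
`cᵢ ≤ min(sᵢ, ℓmᵢ)`.
-/

open Module Function

namespace LinearEquiv

def piComm (R : Type*) [Semiring R] {ι κ : Type*} (φ : ι → κ → Type*)
    [∀ i j, AddCommMonoid (φ i j)] [∀ i j, Module R (φ i j)] :
    (∀ i j, φ i j) ≃ₗ[R] ∀ j i, φ i j where
  __ := Equiv.piComm φ
  map_add' _ _ := rfl
  map_smul' _ _ := rfl

end LinearEquiv

section

variable {R : Type*} [Ring R]

section Schur

variable {X Y : Type*} [AddCommGroup X] [Module R X] [AddCommGroup Y] [Module R Y]
  [IsSimpleModule R X] [IsSimpleModule R Y]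

theorem LinearMap.eq_zero_of_isEmpty_linearEquiv (h : IsEmpty (X ≃ₗ[R] Y)) (f : X →ₗ[R] Y) :
    f = 0 := by
  by_contra hf
  exact h.elim (.ofBijective f (bijective_of_ne_zero hf))

theorem LinearMap.eq_zero_of_isEmpty_linearEquiv_fun (h : IsEmpty (X ≃ₗ[R] Y))
    {P Q : Type*} [Finite P] (f : (P → X) →ₗ[R] (Q → Y)) : f = 0 := by
  classical
  refine pi_ext' fun p ↦ ext fun x ↦ funext fun q ↦ ?_
  have := eq_zero_of_isEmpty_linearEquiv h (proj q ∘ₗ f ∘ₗ single R (fun _ ↦ X) p)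
  simpa using congr($this x)

end Schur

section Multiplicity

variable {ι : Type*} {V : ι → Type*} [∀ i, AddCommGroup (V i)] [∀ i, Module R (V i)]

theorem IsSimpleModule.exists_linearEquiv_of_ne_zero [∀ i, IsSimpleModule R (V i)]
    {S : Type*} [AddCommGroup S] [Module R S] [IsSimpleModule R S] {Q : ι → Type*}
    {f : S →ₗ[R] ∀ i, Q i → V i} (hf : f ≠ 0) :
    ∃ i, Nonempty (S ≃ₗ[R] V i) := by
  obtain ⟨i, q, hiq⟩ : ∃ i q, LinearMap.proj q ∘ₗ LinearMap.proj i ∘ₗ f ≠ 0 := by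
    by_contra! h
    exact hf (LinearMap.ext fun x ↦ funext fun i ↦ funext fun q ↦ congr($(h i q) x))
  exact ⟨i, ⟨.ofBijective _ (LinearMap.bijective_of_ne_zero hiq)⟩⟩

theorem exists_linearEquiv_pi_fin_fun_of_forall {K : Type*} [Finite K] {S : K → Type*}
    [∀ k, AddCommGroup (S k)] [∀ k, Module R (S k)] (h : ∀ k, ∃ i, Nonempty (S k ≃ₗ[R] V i)) :
    ∃ c : ι → ℕ, Nonempty ((∀ k, S k) ≃ₗ[R] ∀ i, Fin (c i) → V i) := by
  choose κ hκ using h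
  let fiber (i : ι) := {k // κ k = i}
  have e (i : ι) (k : fiber i) : S k.1 ≃ₗ[R] V i := (k.2 ▸ hκ k.1).some
  refine ⟨fun i ↦ Nat.card (fiber i), ⟨?_⟩⟩
  exact (LinearEquiv.piCongrLeft R S (Equiv.sigmaFiberEquiv κ)).symm ≪≫ₗ
    LinearEquiv.piCurry R (fun i (k : fiber i) ↦ S k.1) ≪≫ₗ
    LinearEquiv.piCongrRight fun i ↦ LinearEquiv.piCongrRight (e i) ≪≫ₗ
      LinearEquiv.funCongrLeft R (V i) (Finite.equivFin (fiber i)).symm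

theorem exists_linearEquiv_pi_fin_fun_of_injective [IsSemisimpleRing R]
    [∀ i, IsSimpleModule R (V i)] {X : Type*} [AddCommGroup X] [Module R X] [Module.Finite R X] {Q : ι → Type*}
    (f : X →ₗ[R] ∀ i, Q i → V i) (hf : Injective f) :
    ∃ c : ι → ℕ, Nonempty (X ≃ₗ[R] ∀ i, Fin (c i) → V i) := by
  obtain ⟨n, S, e, hS⟩ := IsSemisimpleModule.exists_linearEquiv_fin_dfinsupp R X
  have hSV (k : Fin n) : ∃ i, Nonempty (S k ≃ₗ[R] V i) :=
    have := IsSimpleModule.nontrivial R (S k)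
    IsSimpleModule.exists_linearEquiv_of_ne_zero
      (LinearMap.ne_zero_of_injective (f := f ∘ₗ (S k).subtype)
        (hf.comp (S k).subtype_injective))
  obtain ⟨c, ⟨e'⟩⟩ := exists_linearEquiv_pi_fin_fun_of_forall hSV
  exact ⟨c, ⟨e ≪≫ₗ DFinsupp.linearEquivFunOnFintype ≪≫ₗ e'⟩⟩

theorem enatCard_le_of_injective_pi_fun [∀ i, IsSimpleModule R (V i)] [DecidableEq ι]
    (hV : ∀ i j, i ≠ j → IsEmpty (V i ≃ₗ[R] V j)) {P Q : ι → Type*} [∀ i, Finite (P i)]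
    (f : (∀ i, P i → V i) →ₗ[R] ∀ i, Q i → V i) (hf : Injective f) (i : ι) :
    ENat.card (P i) ≤ ENat.card (Q i) := by
  have hoff (j : ι) (hji : j ≠ i) : LinearMap.proj j ∘ₗ f ∘ₗ LinearMap.single R _ i = 0 :=
    LinearMap.eq_zero_of_isEmpty_linearEquiv_fun (hV i j hji.symm) _
  have hdiag : Injective (LinearMap.proj i ∘ₗ f ∘ₗ LinearMap.single R (fun j ↦ P j → V j) i) := by
    refine fun x y hxy ↦ Pi.single_injective i (hf (funext fun j ↦ ?_))
    rcases eq_or_ne j i with rfl | hji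
    · exact hxy
    · exact congr($(hoff j hji) x).trans congr($(hoff j hji) y).symm
  simpa [Module.length_eq_one] using Module.length_le_of_injective _ hdiag

end Multiplicity

theorem exists_injective_fin_fun_of_le (X : Type*) [AddCommGroup X] [Module R X] {c n : ℕ}
    (h : c ≤ n) : ∃ g : (Fin c → X) →ₗ[R] (Fin n → X), Injective g := by
  refine ⟨(Finsupp.linearEquivFunOnFinite R X _).toLinearMap ∘ₗ
    Finsupp.lmapDomain X R (Fin.castLE h) ∘ₗ
    (Finsupp.linearEquivFunOnFinite R X _).symm.toLinearMap, ?_⟩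
  exact (Finsupp.linearEquivFunOnFinite R X _).injective.comp <|
    (Finsupp.mapDomain_injective (Fin.castLE_injective h)).comp
      (Finsupp.linearEquivFunOnFinite R X _).symm.injective

theorem Submodule.exists_injective_span_range_pi_fun [IsSemisimpleRing R] {M κ ι : Type*}
    [AddCommGroup M] [Module R M] [Finite κ] {Q : ι → Type*} {V : ι → Type*}
    [∀ i, AddCommGroup (V i)] [∀ i, Module R (V i)] (e : R ≃ₗ[R] ∀ i, Q i → V i) (u : κ → M) :
    ∃ g : span R (Set.range u) →ₗ[R] ∀ i, κ × Q i → V i, Injective g := by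
  let free : (κ →₀ R) ≃ₗ[R] ∀ i, κ × Q i → V i :=
    Finsupp.linearEquivFunOnFinite R R κ ≪≫ₗ LinearEquiv.piCongrRight (fun _ ↦ e) ≪≫ₗ
      LinearEquiv.piComm R (fun (_ : κ) i ↦ Q i → V i) ≪≫ₗ
      LinearEquiv.piCongrRight fun i ↦ (LinearEquiv.curry R (V i) κ (Q i)).symm
  let r := LinearEquiv.ofEq _ _ (Finsupp.range_linearCombination R (v := u))
  let π := r.toLinearMap ∘ₗ (Finsupp.linearCombination R u).rangeRestrict
  obtain ⟨g, hg⟩ := IsSemisimpleModule.lifting_property π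
    (r.surjective.comp (Finsupp.linearCombination R u).surjective_rangeRestrict) LinearMap.id
  exact ⟨free.toLinearMap ∘ₗ g,
    free.injective.comp (LeftInverse.injective (g := π) fun x ↦ congr($hg x))⟩

end

theorem stmt8_general (F A : Type*) [Field F] [Ring A] [Algebra F A]
    [IsSemisimpleRing A]
    (t : ℕ) (Vi : Fin t → Type*)
    [∀ i, AddCommGroup (Vi i)] [∀ i, Module A (Vi i)]
    [∀ i, Module F (Vi i)] [∀ i, IsScalarTower F A (Vi i)]
    [∀ i, FiniteDimensional F (Vi i)]
    [∀ i, IsSimpleModule A (Vi i)]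
    (hdist : ∀ i j, i ≠ j → IsEmpty (Vi i ≃ₗ[A] Vi j))
    (m : Fin t → ℕ)
    (regiso : A ≃ₗ[A] (∀ i, Fin (m i) → Vi i))
    (M : Type*) [AddCommGroup M] [Module A M] [Module F M]
    [IsScalarTower F A M]
    (s : Fin t → ℕ)
    (Miso : M ≃ₗ[A] (∀ i, Fin (s i) → Vi i))
    (ℓ : ℕ) (u : Fin ℓ → M) :
    (∃ N : Submodule A (∀ i, Fin (min (s i) (ℓ * m i)) → Vi i),
        Nonempty ((Submodule.span A (Set.range u)) ≃ₗ[A] N)) ∧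
    Module.finrank F ((Submodule.span A (Set.range u)).restrictScalars F) ≤
      ∑ i, min (s i) (ℓ * m i) * Module.finrank F (Vi i) := by
  set U := Submodule.span A (Set.range u)
  have : Module.Finite A U := .span_of_finite A (Set.finite_range u)
  let ιM := Miso.toLinearMap ∘ₗ U.subtype
  have hιM : Injective ιM := Miso.injective.comp U.subtype_injective
  obtain ⟨c, ⟨eU⟩⟩ := exists_linearEquiv_pi_fin_fun_of_injective ιM hιM
  obtain ⟨ιA, hιA⟩ := Submodule.exists_injective_span_range_pi_fun regiso u
  have hc (i : Fin t) : c i ≤ min (s i) (ℓ * m i) := by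
    have hs := enatCard_le_of_injective_pi_fun hdist (ιM ∘ₗ eU.symm.toLinearMap)
      (hιM.comp eU.symm.injective) i
    have hm := enatCard_le_of_injective_pi_fun hdist (ιA ∘ₗ eU.symm.toLinearMap)
      (hιA.comp eU.symm.injective) i
    simp only [ENat.card_eq_coe_fintype_card, Fintype.card_fin, Fintype.card_prod] at hs hm
    exact le_min (mod_cast hs) (mod_cast hm)
  choose φ hφ using fun i ↦ exists_injective_fin_fun_of_le (R := A) (Vi i) (hc i)
  let e := eU ≪≫ₗ LinearEquiv.ofInjective (LinearMap.piMap φ) (Injective.piMap hφ)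
  refine ⟨⟨_, ⟨e⟩⟩, ?_⟩
  calc finrank F (U.restrictScalars F)
      = finrank F ((LinearMap.range (LinearMap.piMap φ)).restrictScalars F) :=
        (e.restrictScalars F).finrank_eq
    _ ≤ finrank F (∀ i, Fin (min (s i) (ℓ * m i)) → Vi i) := Submodule.finrank_le _
    _ = ∑ i, min (s i) (ℓ * m i) * finrank F (Vi i) := by simp [Module.finrank_pi_fintype]

theorem stmt8 (F A : Type*) [Field F] [Ring A] [Algebra F A]
    [FiniteDimensional F A] [IsSemisimpleRing A]
    (t : ℕ) (Vi : Fin t → Type*)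
    [∀ i, AddCommGroup (Vi i)] [∀ i, Module A (Vi i)]
    [∀ i, Module F (Vi i)] [∀ i, IsScalarTower F A (Vi i)]
    [∀ i, FiniteDimensional F (Vi i)]
    [∀ i, IsSimpleModule A (Vi i)]
    (hdist : ∀ i j, i ≠ j → IsEmpty (Vi i ≃ₗ[A] Vi j))
    (m : Fin t → ℕ)
    (regiso : A ≃ₗ[A] (∀ i, Fin (m i) → Vi i))
    (M : Type*) [AddCommGroup M] [Module A M] [Module F M]
    [IsScalarTower F A M] [FiniteDimensional F M]
    (s : Fin t → ℕ)
    (Miso : M ≃ₗ[A] (∀ i, Fin (s i) → Vi i))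
    (ℓ : ℕ) (hℓ : 1 ≤ ℓ) (u : Fin ℓ → M) :
    (∃ N : Submodule A (∀ i, Fin (min (s i) (ℓ * m i)) → Vi i),
        Nonempty ((Submodule.span A (Set.range u)) ≃ₗ[A] N)) ∧
    Module.finrank F ((Submodule.span A (Set.range u)).restrictScalars F) ≤
      ∑ i, min (s i) (ℓ * m i) * Module.finrank F (Vi i) :=
  stmt8_general F A t Vi hdist m regiso M s Miso ℓ u
end

section
/- Let A be a finite-dimensional semisimple F-algebra decomposing as a left module over itself as ⨁ᵢ₌₁ᵗ Vᵢ^{mᵢ} (Vᵢ pairwise non-isomorphic simples) and let V ≅ ⨁ᵢ₌₁ᵗ Vᵢ^{sᵢ} be a finite-dimensional A-module. Then for every positive integer ℓ there exist elements u₁,…,u_ℓ ∈ V whose generated submodule A·{u₁,…,u_ℓ} is isomorphic to ⨁ᵢ₌₁ᵗ Vᵢ^{dᵢ} with dᵢ = min(sᵢ, ℓmᵢ), and this submodule has the maximum possible dimension among all submodules of V generated by at most ℓ elements. -/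
open Module

section stmt9aux

variable {F A : Type*} [Field F] [Ring A] [Algebra F A]

instance stmt9scc (N : Type*) [AddCommGroup N] [Module A N] [Module F N]
    [IsScalarTower F A N] : SMulCommClass A F N := SMulCommClass.symm F A N

theorem stmt9fd (V W : Type*) [AddCommGroup V] [Module A V] [Module F V] [IsScalarTower F A V]
    [AddCommGroup W] [Module A W] [Module F W] [IsScalarTower F A W]
    [FiniteDimensional F V] [FiniteDimensional F W] :
    FiniteDimensional F (V →ₗ[A] W) :=
  FiniteDimensional.of_injective (LinearMap.restrictScalarsₗ F A V W F)
    (LinearMap.restrictScalars_injective F)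

/-- Hom into a finite product decomposes. -/
def stmt9homPi {ι : Type*} [Fintype ι] (V : Type*) [AddCommGroup V] [Module A V]
    (N : ι → Type*) [∀ j, AddCommGroup (N j)] [∀ j, Module A (N j)]
    [∀ j, Module F (N j)] [∀ j, IsScalarTower F A (N j)] :
    (V →ₗ[A] ∀ j, N j) ≃ₗ[F] ∀ j, (V →ₗ[A] N j) where
  toFun f j := (LinearMap.proj j) ∘ₗ f
  invFun g := LinearMap.pi g
  map_add' f g := rfl
  map_smul' c f := rfl
  left_inv f := rfl
  right_inv g := rfl

/-- Post-composition with an `A`-linear equiv, as `F`-linear equiv of hom spaces. -/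
def stmt9congrRight {V W W' : Type*} [AddCommGroup V] [Module A V]
    [AddCommGroup W] [Module A W] [Module F W] [IsScalarTower F A W]
    [AddCommGroup W'] [Module A W'] [Module F W'] [IsScalarTower F A W']
    (e : W ≃ₗ[A] W') : (V →ₗ[A] W) ≃ₗ[F] (V →ₗ[A] W') where
  toFun f := e.toLinearMap ∘ₗ f
  invFun f := e.symm.toLinearMap ∘ₗ f
  map_add' f g := by ext x; simp
  map_smul' c f := by
    ext x; simp only [LinearMap.coe_comp, LinearEquiv.coe_coe, Function.comp_apply,
      LinearMap.smul_apply, RingHom.id_apply]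
    exact e.toLinearMap.map_smul_of_tower c (f x)
  left_inv f := by ext x; simp
  right_inv f := by ext x; simp

/-- Post-composition with an injective `A`-linear map, as an `F`-linear map of hom spaces. -/
def stmt9comp {V W W' : Type*} [AddCommGroup V] [Module A V]
    [AddCommGroup W] [Module A W] [Module F W] [IsScalarTower F A W]
    [AddCommGroup W'] [Module A W'] [Module F W'] [IsScalarTower F A W']
    (g : W →ₗ[A] W') : (V →ₗ[A] W) →ₗ[F] (V →ₗ[A] W') where
  toFun f := g ∘ₗ f
  map_add' f f' := by ext x; simp
  map_smul' c f := by
    ext x; simp only [LinearMap.coe_comp, Function.comp_apply, LinearMap.smul_apply,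
      RingHom.id_apply]
    exact g.map_smul_of_tower c (f x)

theorem stmt9hom_le {V W W' : Type*} [AddCommGroup V] [Module A V]
    [AddCommGroup W] [Module A W] [Module F W] [IsScalarTower F A W]
    [AddCommGroup W'] [Module A W'] [Module F W'] [IsScalarTower F A W']
    [FiniteDimensional F (V →ₗ[A] W')]
    (g : W →ₗ[A] W') (hg : Function.Injective g) :
    finrank F (V →ₗ[A] W) ≤ finrank F (V →ₗ[A] W') := by
  refine LinearMap.finrank_le_finrank_of_injective (f := stmt9comp (V := V) g) ?_
  intro f f' h
  ext x
  exact hg (LinearMap.congr_fun h x)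

variable {t : ℕ} {Vi : Fin t → Type*}
  [∀ i, AddCommGroup (Vi i)] [∀ i, Module A (Vi i)]
  [∀ i, Module F (Vi i)] [∀ i, IsScalarTower F A (Vi i)]
  [∀ i, FiniteDimensional F (Vi i)]

/-- Master formula: `dim_F W = ∑ i, m i * dim_F Hom_A(V i, W)`. -/
theorem stmt9master [FiniteDimensional F A] {m : Fin t → ℕ}
    (regiso : A ≃ₗ[A] (∀ i, Fin (m i) → Vi i))
    (W : Type*) [AddCommGroup W] [Module A W] [Module F W] [IsScalarTower F A W]
    [FiniteDimensional F W] :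
    finrank F W = ∑ i, m i * finrank F (Vi i →ₗ[A] W) := by
  haveI : ∀ i, FiniteDimensional F (Vi i →ₗ[A] W) := fun i => stmt9fd _ _
  have E : (∀ i, Fin (m i) → (Vi i →ₗ[A] W)) ≃ₗ[F] W :=
    (LinearEquiv.piCongrRight fun i => LinearMap.lsum A (fun _ : Fin (m i) => Vi i) F).trans
      ((LinearMap.lsum A (fun i => Fin (m i) → Vi i) F).trans
        ((LinearEquiv.congrLeft W F regiso).symm.trans (LinearMap.ringLmapEquivSelf A F W)))
  rw [← E.finrank_eq, finrank_pi_fintype]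
  refine Finset.sum_congr rfl fun i _ => ?_
  rw [finrank_pi_fintype, Finset.sum_const, Finset.card_univ, Fintype.card_fin, smul_eq_mul]

theorem stmt9schur [∀ i, IsSimpleModule A (Vi i)]
    (hdist : ∀ i j, i ≠ j → IsEmpty (Vi i ≃ₗ[A] Vi j))
    {i j : Fin t} (hij : i ≠ j) : finrank F (Vi i →ₗ[A] Vi j) = 0 := by
  have hz : ∀ f : Vi i →ₗ[A] Vi j, f = 0 := fun f =>
    f.bijective_or_eq_zero.resolve_left fun hb =>
      (hdist i j hij).false (LinearEquiv.ofBijective f hb)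
  haveI : Subsingleton (Vi i →ₗ[A] Vi j) := ⟨fun f g => (hz f).trans (hz g).symm⟩
  exact finrank_zero_of_subsingleton

/-- `dim_F Hom(V i, ∏ j, (V j)^(n j)) = n i * dim_F End(V i)`. -/
theorem stmt9e_model [∀ i, IsSimpleModule A (Vi i)]
    (hdist : ∀ i j, i ≠ j → IsEmpty (Vi i ≃ₗ[A] Vi j))
    (n : Fin t → ℕ) (i : Fin t) :
    finrank F (Vi i →ₗ[A] (∀ j, Fin (n j) → Vi j))
      = n i * finrank F (Vi i →ₗ[A] Vi i) := by
  haveI : ∀ j, FiniteDimensional F (Vi i →ₗ[A] Vi j) := fun j => stmt9fd _ _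
  have E : (Vi i →ₗ[A] ∀ j, Fin (n j) → Vi j) ≃ₗ[F] ∀ j, Fin (n j) → (Vi i →ₗ[A] Vi j) :=
    (stmt9homPi _ _).trans (LinearEquiv.piCongrRight fun j => stmt9homPi _ _)
  rw [E.finrank_eq, finrank_pi_fintype, Finset.sum_eq_single i]
  · rw [finrank_pi_fintype, Finset.sum_const, Finset.card_univ, Fintype.card_fin, smul_eq_mul]
  · intro j _ hj
    rw [finrank_pi_fintype, stmt9schur hdist (Ne.symm hj), Finset.sum_const,
      smul_eq_mul, Nat.mul_zero]
  · intro h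
    exact absurd (Finset.mem_univ i) h

/-- Extend coordinates by zero: `∏ (V i)^(d i) → ∏ (V i)^(n i)` for `d ≤ n`. -/
def stmt9emb (n d : Fin t → ℕ) (hdn : ∀ i, d i ≤ n i) :
    (∀ i, Fin (d i) → Vi i) →ₗ[A] (∀ i, Fin (n i) → Vi i) where
  toFun x i j := if h : (j : ℕ) < d i then x i ⟨j, h⟩ else 0
  map_add' x y := by
    funext i j
    by_cases h : (j : ℕ) < d i <;> simp [h]
  map_smul' a x := by
    funext i j
    by_cases h : (j : ℕ) < d i <;> simp [h]

/-- Truncate coordinates. -/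
def stmt9proj (n d : Fin t → ℕ) (hdn : ∀ i, d i ≤ n i) :
    (∀ i, Fin (n i) → Vi i) →ₗ[A] (∀ i, Fin (d i) → Vi i) where
  toFun x i k := x i (Fin.castLE (hdn i) k)
  map_add' x y := rfl
  map_smul' a x := rfl

theorem stmt9proj_emb (n d : Fin t → ℕ) (hdn : ∀ i, d i ≤ n i) (y : ∀ i, Fin (d i) → Vi i) :
    stmt9proj (A := A) n d hdn (stmt9emb (A := A) n d hdn y) = y := by
  funext i k
  show (if h : ((Fin.castLE (hdn i) k : Fin (n i)) : ℕ) < d i then y i ⟨_, h⟩ else 0) = y i k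
  rw [dif_pos (by simpa using k.2)]
  exact congrArg (y i) (Fin.ext rfl)

theorem stmt9emb_inj (n d : Fin t → ℕ) (hdn : ∀ i, d i ≤ n i) :
    Function.Injective (stmt9emb (A := A) (Vi := Vi) n d hdn) :=
  Function.LeftInverse.injective (stmt9proj_emb n d hdn)

theorem stmt9proj_surj (n d : Fin t → ℕ) (hdn : ∀ i, d i ≤ n i) :
    Function.Surjective (stmt9proj (A := A) (Vi := Vi) n d hdn) :=
  fun y => ⟨stmt9emb n d hdn y, stmt9proj_emb n d hdn y⟩

/-- The map `A^ℓ → ∏ i, (V i)^(ℓ * m i)` induced by `regiso`. -/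
def stmt9phi {m : Fin t → ℕ} (regiso : A ≃ₗ[A] ∀ i, Fin (m i) → Vi i)
    (hm : ∀ i, 0 < m i) (ℓ : ℕ) :
    (Fin ℓ → A) →ₗ[A] (∀ i, Fin (ℓ * m i) → Vi i) where
  toFun a i k := regiso (a ⟨(k : ℕ) / m i, (Nat.div_lt_iff_lt_mul (hm i)).2 k.2⟩) i
      ⟨(k : ℕ) % m i, Nat.mod_lt _ (hm i)⟩
  map_add' a b := by funext i k; simp
  map_smul' r a := by
    funext i k
    simp only [Pi.smul_apply, smul_eq_mul, RingHom.id_apply]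
    rw [show r * a _ = r • a _ from rfl, map_smul]
    rfl

theorem stmt9phi_surj {m : Fin t → ℕ} (regiso : A ≃ₗ[A] ∀ i, Fin (m i) → Vi i)
    (hm : ∀ i, 0 < m i) (ℓ : ℕ) : Function.Surjective (stmt9phi regiso hm ℓ) := by
  intro y
  refine ⟨fun q => regiso.symm fun i r => y i ⟨m i * q + r, ?_⟩, ?_⟩
  · calc (m i : ℕ) * q + r < m i * q + m i := Nat.add_lt_add_left r.2 _
      _ = m i * (q + 1) := (Nat.mul_succ _ _).symm
      _ ≤ m i * ℓ := Nat.mul_le_mul_left _ q.2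
      _ = ℓ * m i := Nat.mul_comm _ _
  · funext i k
    show regiso (regiso.symm _) i _ = y i k
    rw [LinearEquiv.apply_symm_apply]
    exact congrArg (y i) (Fin.ext (Nat.div_add_mod _ _))

/-- The linear combination map `A^ℓ → M` attached to a family of vectors. -/
def stmt9combo {M : Type*} [AddCommGroup M] [Module A M] {ℓ : ℕ} (v : Fin ℓ → M) :
    (Fin ℓ → A) →ₗ[A] M where
  toFun a := ∑ j, a j • v j
  map_add' a b := by simp [add_smul, Finset.sum_add_distrib]
  map_smul' r a := by simp [smul_eq_mul, mul_smul, Finset.smul_sum]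

theorem stmt9combo_single {M : Type*} [AddCommGroup M] [Module A M] {ℓ : ℕ}
    (v : Fin ℓ → M) (j : Fin ℓ) : stmt9combo (A := A) v (Pi.single j 1) = v j := by
  show ∑ k, (Pi.single j (1 : A) : Fin ℓ → A) k • v k = v j
  rw [Finset.sum_eq_single j]
  · simp
  · intro k _ hk
    rw [Pi.single_eq_of_ne hk, zero_smul]
  · intro h
    exact absurd (Finset.mem_univ j) h

theorem stmt9span_eq {M : Type*} [AddCommGroup M] [Module A M] {ℓ : ℕ} (v : Fin ℓ → M) :
    Submodule.span A (Set.range v) = LinearMap.range (stmt9combo (A := A) v) := by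
  refine le_antisymm (Submodule.span_le.2 ?_) ?_
  · rintro _ ⟨j, rfl⟩
    show v j ∈ LinearMap.range (stmt9combo (A := A) v)
    exact ⟨(Pi.single j 1 : Fin ℓ → A), stmt9combo_single (A := A) v j⟩
  · rintro x ⟨a, rfl⟩
    show ∑ j, a j • v j ∈ Submodule.span A (Set.range v)
    exact Submodule.sum_mem _ fun j _ =>
      Submodule.smul_mem _ _ (Submodule.subset_span (Set.mem_range_self j))

theorem stmt9combo_of_map {M : Type*} [AddCommGroup M] [Module A M] {ℓ : ℕ}
    (f : (Fin ℓ → A) →ₗ[A] M) :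
    stmt9combo (A := A) (fun j => f (Pi.single j 1)) = f := by
  apply LinearMap.ext
  intro a
  show ∑ j, a j • f (Pi.single j 1) = f a
  have : ∀ j, a j • f (Pi.single j 1) = f (Pi.single j (a j)) := by
    intro j
    rw [← map_smul]
    congr 1
    funext k
    by_cases h : k = j <;> simp [Pi.single_apply, h]
  simp_rw [this, ← map_sum, Finset.univ_sum_single]
theorem stmt9minmul (a b k : ℕ) : min (a * k) (b * k) = min a b * k := by
  rcases le_total a b with h | h
  · rw [min_eq_left (Nat.mul_le_mul_right k h), min_eq_left h]
  · rw [min_eq_right (Nat.mul_le_mul_right k h), min_eq_right h]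

end stmt9aux

theorem stmt9 (F A : Type*) [Field F] [Ring A] [Algebra F A]
    [FiniteDimensional F A] [IsSemisimpleRing A]
    (t : ℕ) (Vi : Fin t → Type*)
    [∀ i, AddCommGroup (Vi i)] [∀ i, Module A (Vi i)]
    [∀ i, Module F (Vi i)] [∀ i, IsScalarTower F A (Vi i)]
    [∀ i, FiniteDimensional F (Vi i)]
    [∀ i, IsSimpleModule A (Vi i)]
    (hdist : ∀ i j, i ≠ j → IsEmpty (Vi i ≃ₗ[A] Vi j))
    (m : Fin t → ℕ)
    (regiso : A ≃ₗ[A] (∀ i, Fin (m i) → Vi i))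
    (M : Type*) [AddCommGroup M] [Module A M] [Module F M]
    [IsScalarTower F A M] [FiniteDimensional F M]
    (s : Fin t → ℕ)
    (Miso : M ≃ₗ[A] (∀ i, Fin (s i) → Vi i))
    (ℓ : ℕ) (hℓ : 1 ≤ ℓ) :
    ∃ u : Fin ℓ → M,
      Nonempty ((Submodule.span A (Set.range u)) ≃ₗ[A]
        (∀ i, Fin (min (s i) (ℓ * m i)) → Vi i)) ∧
      ∀ u' : Fin ℓ → M,
        Module.finrank F ((Submodule.span A (Set.range u')).restrictScalars F) ≤
          Module.finrank F ((Submodule.span A (Set.range u)).restrictScalars F) := by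
  classical
  haveI : ∀ i, FiniteDimensional F (Vi i →ₗ[A] Vi i) := fun i => stmt9fd _ _
  -- the multiplicity of `Vi i` in `A` is positive
  have ri : ∀ i, finrank F (Vi i) = m i * finrank F (Vi i →ₗ[A] Vi i) := by
    intro i
    rw [stmt9master regiso (Vi i), Finset.sum_eq_single i]
    · intro j _ hj
      rw [stmt9schur hdist hj, Nat.mul_zero]
    · intro h
      exact absurd (Finset.mem_univ i) h
  have hm : ∀ i, 0 < m i := by
    intro i
    have hpos : 0 < finrank F (Vi i) := by
      haveI := IsSimpleModule.nontrivial (R := A) (M := Vi i)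
      exact finrank_pos
    rw [ri i] at hpos
    exact Nat.pos_of_ne_zero fun h => by simp [h] at hpos
  set d : Fin t → ℕ := fun i => min (s i) (ℓ * m i) with hd
  have hds : ∀ i, d i ≤ s i := fun i => min_le_left _ _
  have hdlm : ∀ i, d i ≤ ℓ * m i := fun i => min_le_right _ _
  -- the construction
  set ψ : (Fin ℓ → A) →ₗ[A] (∀ i, Fin (d i) → Vi i) :=
    stmt9proj (fun i => ℓ * m i) d hdlm ∘ₗ stmt9phi regiso hm ℓ with hψdef
  have hψ : Function.Surjective ψ := by
    rw [hψdef, LinearMap.coe_comp]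
    exact (stmt9proj_surj _ _ hdlm).comp (stmt9phi_surj regiso hm ℓ)
  set g : (∀ i, Fin (d i) → Vi i) →ₗ[A] M :=
    Miso.symm.toLinearMap ∘ₗ stmt9emb s d hds with hgdef
  have hg : Function.Injective g := by
    rw [hgdef, LinearMap.coe_comp]
    exact Function.Injective.comp Miso.symm.injective (stmt9emb_inj s d hds)
  set f : (Fin ℓ → A) →ₗ[A] M := g ∘ₗ ψ with hfdef
  set u : Fin ℓ → M := fun j => f (Pi.single j 1) with hu
  have hspan : Submodule.span A (Set.range u) = LinearMap.range g := by
    rw [stmt9span_eq (A := A) u, hu, stmt9combo_of_map f, hfdef, LinearMap.range_comp,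
      LinearMap.range_eq_top.2 hψ, Submodule.map_top]
  have E_u : (Submodule.span A (Set.range u)) ≃ₗ[A] (∀ i, Fin (d i) → Vi i) :=
    (LinearEquiv.ofEq _ _ hspan).trans (LinearEquiv.ofInjective g hg).symm
  -- finrank facts for submodules
  have hrs : ∀ p : Submodule A M, finrank F (p.restrictScalars F) = finrank F p := fun p =>
    LinearEquiv.finrank_eq ((Submodule.restrictScalarsEquiv F A M p).restrictScalars F)
  haveI hfd : ∀ p : Submodule A M, FiniteDimensional F p := fun p =>
    Module.Finite.equiv ((Submodule.restrictScalarsEquiv F A M p).restrictScalars F)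
  -- the key dimension bound
  have e_le : ∀ (i : Fin t) (u' : Fin ℓ → M),
      finrank F (Vi i →ₗ[A] (Submodule.span A (Set.range u')))
        ≤ d i * finrank F (Vi i →ₗ[A] Vi i) := by
    intro i u'
    set W' : Submodule A M := Submodule.span A (Set.range u') with hW'
    haveI : FiniteDimensional F (Vi i →ₗ[A] (∀ j, Fin (s j) → Vi j)) := stmt9fd _ _
    have b1 : finrank F (Vi i →ₗ[A] W') ≤ s i * finrank F (Vi i →ₗ[A] Vi i) := by
      have hj1 : Function.Injective (Miso.toLinearMap ∘ₗ W'.subtype) := by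
        rw [LinearMap.coe_comp]
        exact Function.Injective.comp Miso.injective W'.injective_subtype
      calc finrank F (Vi i →ₗ[A] W')
          ≤ finrank F (Vi i →ₗ[A] (∀ j, Fin (s j) → Vi j)) := stmt9hom_le _ hj1
        _ = s i * finrank F (Vi i →ₗ[A] Vi i) := stmt9e_model hdist s i
    have b2 : finrank F (Vi i →ₗ[A] W') ≤ (ℓ * m i) * finrank F (Vi i →ₗ[A] Vi i) := by
      obtain ⟨C, hC⟩ := exists_isCompl (LinearMap.ker (stmt9combo (A := A) u'))
      have E1 : W' ≃ₗ[A] LinearMap.range (stmt9combo (A := A) u') :=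
        LinearEquiv.ofEq _ _ (stmt9span_eq u')
      set j2 : W' →ₗ[A] (Fin ℓ → A) :=
        C.subtype ∘ₗ ((Submodule.quotientEquivOfIsCompl _ C hC).toLinearMap ∘ₗ
          ((stmt9combo (A := A) u').quotKerEquivRange.symm.toLinearMap ∘ₗ E1.toLinearMap))
        with hj2def
      have hj2 : Function.Injective j2 := by
        rw [hj2def]
        simp only [LinearMap.coe_comp, LinearEquiv.coe_coe]
        exact C.injective_subtype.comp ((Submodule.quotientEquivOfIsCompl _ C hC).injective.comp
          (((stmt9combo (A := A) u').quotKerEquivRange.symm.injective).comp E1.injective))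
      haveI : FiniteDimensional F (Vi i →ₗ[A] (Fin ℓ → A)) := stmt9fd _ _
      calc finrank F (Vi i →ₗ[A] W')
          ≤ finrank F (Vi i →ₗ[A] (Fin ℓ → A)) := stmt9hom_le _ hj2
        _ = ℓ * finrank F (Vi i →ₗ[A] A) := by
            rw [(stmt9homPi (F := F) (Vi i) (fun _ : Fin ℓ => A)).finrank_eq,
              finrank_pi_fintype, Finset.sum_const, Finset.card_univ, Fintype.card_fin,
              smul_eq_mul]
        _ = ℓ * (m i * finrank F (Vi i →ₗ[A] Vi i)) := by
            rw [(stmt9congrRight (V := Vi i) regiso).finrank_eq, stmt9e_model hdist m i]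
        _ = (ℓ * m i) * finrank F (Vi i →ₗ[A] Vi i) := (Nat.mul_assoc _ _ _).symm
    calc finrank F (Vi i →ₗ[A] W')
        ≤ min (s i * finrank F (Vi i →ₗ[A] Vi i))
            ((ℓ * m i) * finrank F (Vi i →ₗ[A] Vi i)) := le_min b1 b2
      _ = d i * finrank F (Vi i →ₗ[A] Vi i) := stmt9minmul _ _ _
  refine ⟨u, ⟨E_u⟩, ?_⟩
  intro u'
  rw [hrs, hrs]
  rw [stmt9master regiso (Submodule.span A (Set.range u')),
    stmt9master regiso (Submodule.span A (Set.range u))]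
  refine Finset.sum_le_sum fun i _ => ?_
  refine Nat.mul_le_mul_left _ ?_
  have heq : finrank F (Vi i →ₗ[A] (Submodule.span A (Set.range u)))
      = d i * finrank F (Vi i →ₗ[A] Vi i) := by
    rw [(stmt9congrRight (V := Vi i) E_u).finrank_eq, stmt9e_model hdist d i]
  rw [heq]
  exact e_le i u'
end

section
/- Let A be a finite-dimensional semisimple F-algebra and V a finite-dimensional faithful A-module. For u ∈ V define Ann_A(u) = {a ∈ A : a·u = 0}. Then the cyclic submodule A·u has maximum dimension among all cyclic submodules of V if and only if Ann_A(u)·V ⊆ A·u. -/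
open Submodule LinearMap Module

/-- The `F`-linear map `x ↦ x • v` from `A` to `V`. -/
def mulAct (F A V : Type*) [Field F] [Ring A] [Algebra F A]
    [AddCommGroup V] [Module A V] [Module F V] [IsScalarTower F A V] (v : V) :
    A →ₗ[F] V where
  toFun x := x • v
  map_add' x y := add_smul x y v
  map_smul' c x := smul_assoc c x v

lemma range_mulAct (F A V : Type*) [Field F] [Ring A] [Algebra F A]
    [AddCommGroup V] [Module A V] [Module F V] [IsScalarTower F A V] (v : V) :
    LinearMap.range (mulAct F A V v) = (Submodule.span A {v}).restrictScalars F := by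
  ext x
  simp only [LinearMap.mem_range, Submodule.restrictScalars_mem,
    Submodule.mem_span_singleton]
  rfl

theorem stmt10 (F A : Type*) [Field F] [Ring A] [Algebra F A]
    [FiniteDimensional F A] [IsSemisimpleRing A]
    (V : Type*) [AddCommGroup V] [Module A V] [Module F V]
    [IsScalarTower F A V] [FiniteDimensional F V]
    (hfaith : ∀ a : A, (∀ v : V, a • v = 0) → a = 0)
    (u : V) :
    (∀ u' : V,
        Module.finrank F ((Submodule.span A {u'}).restrictScalars F) ≤
          Module.finrank F ((Submodule.span A {u}).restrictScalars F)) ↔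
    (∀ a : A, a • u = 0 → ∀ v : V, a • v ∈ Submodule.span A {u}) := by
  classical
  set M : Submodule A V := Submodule.span A {u} with hM
  obtain ⟨W, hW⟩ := exists_isCompl M
  have hMW : ∀ x : V, x ∈ M → x ∈ W → x = 0 := fun x hxM hxW =>
    (Submodule.disjoint_def.mp hW.disjoint) x hxM hxW
  have hsup : M ⊔ W = ⊤ := hW.codisjoint.eq_top
  constructor
  · -- maximality → Ann(u) • V ⊆ A • u
    intro hmax a ha v
    have hkill : ∀ y ∈ W, a • y = 0 := by
      intro y hy
      by_contra hne
      set u' := u + y with hu'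
      have hsub : LinearMap.ker (mulAct F A V u') ≤ LinearMap.ker (mulAct F A V u) := by
        intro x hx
        have hx' : x • u + x • y = 0 := by
          simpa [mulAct, hu', smul_add] using hx
        have h1 : x • u ∈ M := M.smul_mem x (Submodule.mem_span_singleton_self u)
        have h2 : x • y ∈ W := W.smul_mem x hy
        have h3 : x • u = -(x • y) := eq_neg_of_add_eq_zero_left hx'
        have h4 : x • u ∈ W := h3 ▸ W.neg_mem h2
        have : x • u = 0 := hMW _ h1 h4
        simpa [mulAct, LinearMap.mem_ker] using this
      have hstrict : LinearMap.ker (mulAct F A V u') < LinearMap.ker (mulAct F A V u) := by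
        refine lt_of_le_of_ne hsub (fun h => hne ?_)
        have haK : a ∈ LinearMap.ker (mulAct F A V u) := by
          simpa [mulAct, LinearMap.mem_ker] using ha
        rw [← h] at haK
        have : a • u + a • y = 0 := by
          simpa [mulAct, hu', LinearMap.mem_ker, smul_add] using haK
        rw [ha, zero_add] at this
        exact this
      have hlt := Submodule.finrank_lt_finrank_of_lt hstrict
      have r1 := LinearMap.finrank_range_add_finrank_ker (mulAct F A V u')
      have r2 := LinearMap.finrank_range_add_finrank_ker (mulAct F A V u)
      have hm := hmax u'
      rw [← range_mulAct F A V u', ← range_mulAct F A V u] at hm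
      omega
    obtain ⟨m, hm, y, hy, hmy⟩ := Submodule.mem_sup.mp (hsup ▸ Submodule.mem_top : v ∈ M ⊔ W)
    have : a • v = a • m + a • y := by rw [← hmy, smul_add]
    rw [this, hkill y hy, add_zero]
    exact M.smul_mem a hm
  · -- Ann(u) • V ⊆ A • u → maximality
    intro H u'
    obtain ⟨p, hp, w, hw, hpw⟩ := Submodule.mem_sup.mp (hsup ▸ Submodule.mem_top : u' ∈ M ⊔ W)
    -- I = annihilator of W in A, as an F-subspace
    set I : Submodule F A :=
      { carrier := {x : A | ∀ y ∈ W, x • y = 0}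
        add_mem' := fun {x₁ x₂} h1 h2 y hy => by rw [add_smul, h1 y hy, h2 y hy, add_zero]
        zero_mem' := fun y hy => zero_smul A y
        smul_mem' := fun c x hx y hy => by
          rw [smul_assoc, hx y hy, smul_zero] } with hI
    have hmemI : ∀ x : A, x ∈ I ↔ ∀ y ∈ W, x • y = 0 := fun x => Iff.rfl
    -- Ann(u) ≤ I
    have h1 : LinearMap.ker (mulAct F A V u) ≤ I := by
      intro x hx
      have hxu : x • u = 0 := by simpa [mulAct, LinearMap.mem_ker] using hx
      intro y hy
      exact hMW _ (H x hxu y) (W.smul_mem x hy)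
    -- I • p ⊆ I • u
    have h3 : Submodule.map (mulAct F A V p) I ≤ Submodule.map (mulAct F A V u) I := by
      rintro z ⟨x, hxI, rfl⟩
      obtain ⟨c, hc⟩ := Submodule.mem_span_singleton.mp hp
      refine ⟨x * c, fun y hy => ?_, ?_⟩
      · rw [mul_smul]
        exact hxI (c • y) (W.smul_mem c hy)
      · show (x * c) • u = x • p
        rw [mul_smul, hc]
    -- x ∈ I and x • p = 0 → x • u' = 0
    have h2 : ∀ x : A, x ∈ I → x • p = 0 → x • u' = 0 := by
      intro x hxI hxp
      rw [← hpw, smul_add, hxp, hxI w hw, add_zero]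
    -- dimension chase
    have e1 : finrank F (LinearMap.ker ((mulAct F A V u).domRestrict I)) =
        finrank F (LinearMap.ker (mulAct F A V u)) := by
      have he : LinearMap.ker ((mulAct F A V u).domRestrict I) =
          Submodule.comap I.subtype (LinearMap.ker (mulAct F A V u)) := by
        ext x; simp [LinearMap.mem_ker]
      rw [he]
      exact (Submodule.comapSubtypeEquivOfLe h1).finrank_eq
    have r3 := LinearMap.finrank_range_add_finrank_ker ((mulAct F A V u).domRestrict I)
    have r4 := LinearMap.finrank_range_add_finrank_ker ((mulAct F A V p).domRestrict I)
    have e3 : finrank F (LinearMap.range ((mulAct F A V p).domRestrict I)) ≤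
        finrank F (LinearMap.range ((mulAct F A V u).domRestrict I)) := by
      rw [LinearMap.range_domRestrict, LinearMap.range_domRestrict]
      exact Submodule.finrank_mono h3
    have e4 : finrank F (LinearMap.ker ((mulAct F A V p).domRestrict I)) ≤
        finrank F (LinearMap.ker (mulAct F A V u')) := by
      have hle : Submodule.map I.subtype (LinearMap.ker ((mulAct F A V p).domRestrict I)) ≤
          LinearMap.ker (mulAct F A V u') := by
        rintro z ⟨x, hx, rfl⟩
        have hxp : (x : A) • p = 0 := by
          simpa [mulAct, LinearMap.mem_ker] using hx
        have := h2 (x : A) x.2 hxp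
        simpa [mulAct, LinearMap.mem_ker] using this
      calc finrank F (LinearMap.ker ((mulAct F A V p).domRestrict I))
          = finrank F (Submodule.map I.subtype
              (LinearMap.ker ((mulAct F A V p).domRestrict I))) :=
            (Submodule.equivMapOfInjective I.subtype I.injective_subtype _).finrank_eq
        _ ≤ finrank F (LinearMap.ker (mulAct F A V u')) := Submodule.finrank_mono hle
    have r1 := LinearMap.finrank_range_add_finrank_ker (mulAct F A V u')
    have r2 := LinearMap.finrank_range_add_finrank_ker (mulAct F A V u)
    rw [← range_mulAct F A V u', ← range_mulAct F A V u]
    omega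
end

section
/- Let V be a finite-dimensional semisimple module over an F-algebra A with |F| > dim V, with basis v₁,…,vₙ. If elements u₁,…,u_ℓ ∈ V generate a submodule that is not of maximum dimension among submodules generated by at most ℓ elements, then there exist indices i ∈ [ℓ], j ∈ [n] such that for all but at most n scalars ω ∈ F, replacing uᵢ by uᵢ + ω vⱼ yields a strictly larger-dimensional generated submodule. -/
/-!
If `span A (range u)` does not have maximal dimension, some relation `∑ aᵢ • uᵢ = 0` has a
coefficient `a_k` with `a_k • V ⊄ span A (range u)`, hence `a_k • v_j ∉ span A (range u)` for
some basis vector `v_j`. Otherwise every relation coefficient lies in the two-sided ideal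
`I = (span A (range u) : V)`. If `I • V = 0`, every relation of `u` is one of any `u'`. If not,
semisimplicity splits `V = I • V ⊕ ann_V(I)` with `I • V ⊆ span A (range u)`; the projection onto
`ann_V(I)` is central, so by Jacobson density it acts through `A` on finitely many vectors, and
the hypothesis passes to the projected family in the smaller module `ann_V(I)`: induction on
`dim V` shows that `span A (range u)` is maximal.

With `φ b = ∑ bᵢ • uᵢ` and `ψ b = b_k • v_j`, the perturbed submodule is the range of
`φ + ω • ψ`, and `φ a = 0`, `ψ a ∉ range φ`. Modulo the line through `ψ a`, the rank of
`φ + ω • ψ` is at least that of `φ` unless `-ω⁻¹` is an eigenvalue of an endomorphism of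
`range φ`; for `ω ≠ 0` the line itself adds one dimension. This excludes at most `dim V` scalars.
-/

open Module Submodule LinearMap

section Pencil

variable {F E V R : Type*} [Field F] [AddCommGroup E] [Module F E] [AddCommGroup V] [Module F V]
  [AddCommGroup R] [Module F R]

theorem Module.End.exists_finset_injective_one_add_smul [FiniteDimensional F R] (T : End F R) :
    ∃ bad : Finset F, bad.card ≤ finrank F R ∧
      ∀ ω ∉ bad, Function.Injective ⇑(1 + ω • T : End F R) := by
  classical
  -- `1 + ω • T` kills a nonzero vector exactly when `ω ≠ 0` and `-ω⁻¹` is an eigenvalue of `T`.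
  refine ⟨T.charpoly.roots.toFinset.image fun μ => -μ⁻¹, ?_, fun ω hω => ?_⟩
  · calc _ ≤ T.charpoly.roots.toFinset.card := Finset.card_image_le
      _ ≤ T.charpoly.roots.card := Multiset.toFinset_card_le _
      _ ≤ T.charpoly.natDegree := Polynomial.card_roots' _
      _ = finrank F R := LinearMap.charpoly_natDegree T
  rw [← LinearMap.ker_eq_bot, eq_bot_iff]
  intro x hx
  by_contra hx0
  have hTx : x + ω • T x = 0 := hx
  have hω0 : ω ≠ 0 := by rintro rfl; simp_all
  have heig : T.HasEigenvalue (-ω⁻¹) := by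
    refine Module.End.hasEigenvalue_of_hasEigenvector ⟨Module.End.mem_eigenspace_iff.mpr ?_, hx0⟩
    rw [neg_smul, eq_neg_iff_add_eq_zero, ← smul_right_inj hω0, smul_add, smul_inv_smul₀ hω0,
      add_comm, hTx, smul_zero]
  refine hω (Finset.mem_image.mpr ⟨-ω⁻¹, ?_, by simp⟩)
  rw [Multiset.mem_toFinset, Polynomial.mem_roots (LinearMap.charpoly_monic T).ne_zero]
  exact (Module.End.hasEigenvalue_iff_isRoot_charpoly T _).mp heig

theorem LinearMap.exists_finset_injective_add_smul_comp [FiniteDimensional F R]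
    (φ ψ : E →ₗ[F] V) (P : R →ₗ[F] E) (hP : Function.Injective (φ ∘ₗ P)) :
    ∃ bad : Finset F, bad.card ≤ finrank F R ∧
      ∀ ω ∉ bad, Function.Injective ((φ + ω • ψ) ∘ₗ P) := by
  obtain ⟨g, hg⟩ := (φ ∘ₗ P).exists_leftInverse_of_injective (LinearMap.ker_eq_bot.mpr hP)
  obtain ⟨bad, hcard, hbad⟩ := Module.End.exists_finset_injective_one_add_smul (g ∘ₗ ψ ∘ₗ P)
  refine ⟨bad, hcard, fun ω hω => Function.Injective.of_comp (f := g) ?_⟩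
  have h : g ∘ₗ (φ + ω • ψ) ∘ₗ P = 1 + ω • (g ∘ₗ ψ ∘ₗ P) := by
    rw [LinearMap.add_comp, LinearMap.comp_add, LinearMap.smul_comp, LinearMap.comp_smul, hg]
    rfl
  simpa only [← LinearMap.coe_comp, h] using hbad ω hω

theorem LinearMap.exists_finset_finrank_range_lt_add_smul [FiniteDimensional F V]
    (φ ψ : E →ₗ[F] V) (q : E) (hq : φ q = 0) (hψq : ψ q ∉ range φ) :
    ∃ bad : Finset F, bad.card ≤ finrank F V ∧
      ∀ ω ∉ bad, finrank F (range φ) < finrank F (range (φ + ω • ψ)) := by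
  classical
  set K := F ∙ ψ q
  obtain ⟨P, hP⟩ := φ.rangeRestrict.exists_rightInverse_of_surjective φ.range_rangeRestrict
  have hφP : φ ∘ₗ P = (range φ).subtype := by
    ext x
    exact congrArg Subtype.val (LinearMap.congr_fun hP x)
  have hπφP : Function.Injective ((K.mkQ ∘ₗ φ) ∘ₗ P) := by
    rw [LinearMap.comp_assoc, hφP, injective_iff_map_eq_zero]
    rintro ⟨x, hx⟩ hπx
    obtain ⟨c, rfl⟩ := mem_span_singleton.mp ((Submodule.Quotient.mk_eq_zero K).mp hπx)
    by_cases hc : c = 0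
    · simp [hc]
    · exact absurd (by simpa [hc] using (range φ).smul_mem c⁻¹ hx) hψq
  obtain ⟨bad, hcard, hbad⟩ :=
    LinearMap.exists_finset_injective_add_smul_comp (K.mkQ ∘ₗ φ) (K.mkQ ∘ₗ ψ) P hπφP
  have hrank : finrank F (range φ) < finrank F V :=
    Submodule.finrank_lt fun h => hψq (h ▸ mem_top)
  refine ⟨insert 0 bad, (Finset.card_insert_le _ _).trans (by omega), fun ω hω => ?_⟩
  rw [Finset.mem_insert, not_or] at hω
  set χ := φ + ω • ψ
  have hinj : Function.Injective (K.mkQ ∘ₗ χ ∘ₗ P) := by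
    simpa only [χ, LinearMap.comp_add, LinearMap.comp_smul, LinearMap.add_comp,
      LinearMap.smul_comp, LinearMap.comp_assoc] using hbad ω hω.2
  have hψqX : ψ q ∉ range (χ ∘ₗ P) := by
    rintro ⟨y, hy⟩
    have : y = 0 := hinj <| by
      rw [map_zero, LinearMap.comp_apply, hy, mkQ_apply, Submodule.Quotient.mk_eq_zero]
      exact mem_span_singleton_self _
    exact hψq (by simp [← hy, this])
  have hψqχ : ψ q ∈ range χ := ⟨ω⁻¹ • q, by simp [χ, hq, hω.1]⟩
  calc finrank F (range φ) = finrank F (range (χ ∘ₗ P)) :=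
        (LinearMap.finrank_range_of_inj (f := χ ∘ₗ P)
          (Function.Injective.of_comp (f := K.mkQ) hinj)).symm
    _ < finrank F ↥(range (χ ∘ₗ P) ⊔ K) := by rw [finrank_sup_span_singleton hψqX]; omega
    _ ≤ finrank F (range χ) :=
        Submodule.finrank_mono (sup_le (LinearMap.range_comp_le_range _ _)
          (span_le.mpr (Set.singleton_subset_iff.mpr hψqχ)))

end Pencil

section Rank

variable {F M N : Type*} [Field F] [AddCommGroup M] [Module F M] [AddCommGroup N] [Module F N]

theorem LinearMap.finrank_range_le_of_ker_le [FiniteDimensional F N] {f g : M →ₗ[F] N}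
    (h : ker f ≤ ker g) : finrank F (range g) ≤ finrank F (range f) := by
  have : FiniteDimensional F (M ⧸ ker f) := Module.Finite.equiv f.quotKerEquivRange.symm
  rw [← range_liftQ (ker f) g h, ← f.quotKerEquivRange.finrank_eq]
  exact LinearMap.finrank_range_le _

theorem Submodule.finrank_map_add_finrank_ker_of_ker_le [FiniteDimensional F M] (f : M →ₗ[F] N)
    {S : Submodule F M} (h : ker f ≤ S) :
    finrank F (S.map f) + finrank F (ker f) = finrank F S := by
  rw [← range_domRestrict, ← (comapSubtypeEquivOfLe h).finrank_eq, ← ker_domRestrict]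
  exact LinearMap.finrank_range_add_finrank_ker _

theorem Submodule.finrank_le_finrank_map_add_finrank_ker [FiniteDimensional F M] (f : M →ₗ[F] N)
    (S : Submodule F M) : finrank F S ≤ finrank F (S.map f) + finrank F (ker f) := by
  calc finrank F S ≤ finrank F ↥(S ⊔ ker f) := Submodule.finrank_mono le_sup_left
    _ = finrank F (S.map f) + finrank F (ker f) := by
      rw [← finrank_map_add_finrank_ker_of_ker_le f le_sup_right, map_sup]
      rw [le_ker_iff_map.mp le_rfl, sup_bot_eq]

end Rank

section Semisimple

variable {A V : Type*} [Ring A] [AddCommGroup V] [Module A V]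

/-- The annihilator of `I` in `V`: `Submodule.torsionBySet` needs a commutative ring. -/
def Submodule.torsionByIdeal (I : Ideal A) [I.IsTwoSided] : Submodule A V where
  carrier := {x | ∀ c ∈ I, c • x = 0}
  add_mem' hx hy c hc := by rw [smul_add, hx c hc, hy c hc, add_zero]
  zero_mem' c _ := smul_zero c
  smul_mem' a x hx c hc := by rw [← mul_smul, hx _ (I.mul_mem_right a hc)]

variable (I : Ideal A)

theorem Submodule.isCompl_smul_top_torsionByIdeal [I.IsTwoSided] [IsSemisimpleModule A V] :
    IsCompl (I • ⊤ : Submodule A V) (torsionByIdeal I) := by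
  constructor
  · obtain ⟨P, hP⟩ :=
      ComplementedLattice.exists_isCompl (I • ⊤ ⊓ torsionByIdeal I : Submodule A V)
    have hIP : I • ⊤ ≤ P := by
      refine smul_le.mpr fun c hc x _ => ?_
      obtain ⟨y, hy, z, hz, rfl⟩ := mem_sup.mp (hP.sup_eq_top ▸ mem_top (x := x))
      rw [smul_add, (mem_inf.mp hy).2 c hc, zero_add]
      exact P.smul_mem c hz
    exact disjoint_iff.mpr (hP.disjoint.eq_bot_of_le (inf_le_left.trans hIP))
  · obtain ⟨Q, hQ⟩ := ComplementedLattice.exists_isCompl (I • ⊤ : Submodule A V)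
    have hQT : Q ≤ torsionByIdeal I := fun x hx c hc =>
      (Submodule.disjoint_def.mp hQ.disjoint) _ (smul_mem_smul hc mem_top) (Q.smul_mem c hx)
    exact hQ.codisjoint.mono_right hQT

theorem Submodule.smul_top_mem_invtSubmodule (e : End A V) :
    (I • ⊤ : Submodule A V) ∈ e.invtSubmodule := by
  rw [Module.End.mem_invtSubmodule_iff_map_le, map_smul'']
  exact smul_mono_right _ le_top

theorem Submodule.torsionByIdeal_mem_invtSubmodule [I.IsTwoSided] (e : End A V) :
    (torsionByIdeal I : Submodule A V) ∈ e.invtSubmodule := by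
  rw [Module.End.mem_invtSubmodule]
  intro x hx c hc
  rw [← map_smul, hx c hc, map_zero]

theorem Submodule.commute_projection_torsionByIdeal [I.IsTwoSided] [IsSemisimpleModule A V]
    (e : End A V) :
    Commute ((torsionByIdeal I).projection (I • ⊤) (isCompl_smul_top_torsionByIdeal I).symm) e := by
  rw [LinearMap.IsIdempotentElem.commute_iff (isIdempotentElem_projection _), range_projection,
    ker_projection]
  exact ⟨torsionByIdeal_mem_invtSubmodule I e, smul_top_mem_invtSubmodule I e⟩

theorem IsSemisimpleModule.exists_smul_eq_of_forall_commute [IsSemisimpleModule A V] {p : End A V}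
    (hp : ∀ e : End A V, Commute p e) {ι : Type*} [Fintype ι] (w : ι → V) :
    ∃ b : A, ∀ i, b • w i = p (w i) := by
  classical
  let f : End (End A V) V :=
    { toFun := p
      map_add' := p.map_add
      map_smul' := fun e x => LinearMap.congr_fun (hp e).eq x }
  obtain ⟨b, hb⟩ := jacobson_density f (Finset.univ.image w)
  exact ⟨b, fun i => (hb _ (Finset.mem_image_of_mem w (Finset.mem_univ i))).symm⟩

theorem smul_mem_span_comp_of_forall_mem_colon [IsSemisimpleModule A V] {p : End A V}
    (hp : IsIdempotentElem p) (hcomm : ∀ e : End A V, Commute p e) {ι : Type*} [Fintype ι]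
    {u : ι → V} (hu : ∀ a : ι → A, ∑ i, a i • u i = 0 →
      ∀ i, a i ∈ (span A (Set.range u)).colon (⊤ : Submodule A V))
    {a : ι → A} (ha : ∑ i, a i • p (u i) = 0) (i : ι) (x : V) :
    a i • p x ∈ span A (Set.range (p ∘ u)) := by
  -- `b` acts as `p` on the `u j` and on `p x`, so `a * b` is a relation of `u`.
  obtain ⟨b, hb⟩ := IsSemisimpleModule.exists_smul_eq_of_forall_commute hcomm
    (fun o : Option ι => o.elim (p x) u)
  have hpp : p (p x) = p x := LinearMap.congr_fun hp.eq x
  have hrel : ∑ j, (a j * b) • u j = 0 := by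
    have hbu : ∀ j, b • u j = p (u j) := fun j => hb (some j)
    simpa only [mul_smul, hbu] using ha
  have hmem : (a i * b) • p x ∈ span A (Set.range u) :=
    (mem_colon.mp (hu _ hrel i)) _ mem_top
  rw [mul_smul, show b • p x = p x from (hb none).trans hpp] at hmem
  rw [Set.range_comp, ← Submodule.map_span, ← hpp, ← map_smul]
  exact mem_map_of_mem hmem

theorem mem_colon_span_projectionOnto_torsionByIdeal [I.IsTwoSided] [IsSemisimpleModule A V]
    {ι : Type*} [Fintype ι] {u : ι → V} (hu : ∀ a : ι → A, ∑ i, a i • u i = 0 →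
      ∀ i, a i ∈ (span A (Set.range u)).colon (⊤ : Submodule A V))
    {a : ι → A} (ha : ∑ i, a i • (torsionByIdeal I).projectionOnto (I • ⊤)
      (isCompl_smul_top_torsionByIdeal I).symm (u i) = 0) (i : ι) :
    a i ∈ (span A (Set.range ((torsionByIdeal I).projectionOnto (I • ⊤)
      (isCompl_smul_top_torsionByIdeal I).symm ∘ u))).colon
        (⊤ : Submodule A (torsionByIdeal (V := V) I)) := by
  set T := torsionByIdeal (V := V) I
  have hc : IsCompl T (I • ⊤) := (isCompl_smul_top_torsionByIdeal I).symm
  set π := T.projectionOnto (I • ⊤) hc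
  refine mem_colon.mpr fun x _ => ?_
  have hrel : ∑ j, a j • T.projection (I • ⊤) hc (u j) = 0 := by
    have h := congrArg T.subtype ha
    rwa [map_sum, map_zero] at h
  have hmem := smul_mem_span_comp_of_forall_mem_colon (isIdempotentElem_projection hc)
    (commute_projection_torsionByIdeal I) hu hrel i x
  have hpu : ⇑(T.projection (I • ⊤) hc) ∘ u = T.subtype ∘ (π ∘ u) := rfl
  rw [projection_apply_left, hpu, Set.range_comp, ← Submodule.map_span] at hmem
  obtain ⟨y, hy, hyx⟩ := hmem
  exact (Subtype.ext hyx : y = a i • x) ▸ hy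

end Semisimple

section Span

variable {F A V : Type*} [Field F] [Ring A] [Algebra F A] [AddCommGroup V] [Module A V]
  [Module F V] [IsScalarTower F A V] {ι : Type*} [Fintype ι]

theorem finrank_span_le_of_forall_sum_smul_eq_zero [FiniteDimensional F V] (u u' : ι → V)
    (h : ∀ a : ι → A, ∑ i, a i • u i = 0 → ∑ i, a i • u' i = 0) :
    finrank F ((span A (Set.range u')).restrictScalars F) ≤
      finrank F ((span A (Set.range u)).restrictScalars F) := by
  have key := LinearMap.finrank_range_le_of_ker_le
    (f := (Fintype.linearCombination A u).restrictScalars F)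
    (g := (Fintype.linearCombination A u').restrictScalars F) (fun a ha => h a ha)
  rwa [range_restrictScalars, range_restrictScalars, Fintype.range_linearCombination,
    Fintype.range_linearCombination] at key

theorem finrank_span_le_of_forall_mem_colon [FiniteDimensional F V] [IsSemisimpleModule A V]
    (u : ι → V)
    (hu : ∀ a : ι → A, ∑ i, a i • u i = 0 →
      ∀ i, a i ∈ (span A (Set.range u)).colon (⊤ : Submodule A V)) (u' : ι → V) :
    finrank F ((span A (Set.range u')).restrictScalars F) ≤
      finrank F ((span A (Set.range u)).restrictScalars F) := by
  induction hN : finrank F V using Nat.strong_induction_on generalizing V with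
  | _ N ih =>
  set I := (span A (Set.range u)).colon (⊤ : Submodule A V)
  by_cases hbot : (I • ⊤ : Submodule A V) = ⊥
  · refine finrank_span_le_of_forall_sum_smul_eq_zero u u' fun a ha =>
      Finset.sum_eq_zero fun i _ => ?_
    simpa [hbot] using smul_mem_smul (hu a ha i) (mem_top (x := u' i))
  set T := torsionByIdeal (V := V) I
  have hc : IsCompl T (I • ⊤) := (isCompl_smul_top_torsionByIdeal I).symm
  set π := T.projectionOnto (I • ⊤) hc
  have hspan : ∀ v : ι → V, span A (Set.range (π ∘ v)) = (span A (Set.range v)).map π := by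
    intro v
    rw [Set.range_comp, Submodule.map_span]
  have hT : finrank F T < N := by
    rw [← hN]
    refine Submodule.finrank_lt (s := T.restrictScalars F) fun h => hbot ?_
    rw [restrictScalars_eq_top_iff] at h
    exact top_disjoint.mp (h ▸ hc.disjoint)
  have hdesc : ∀ a : ι → A, ∑ i, a i • (π ∘ u) i = 0 →
      ∀ i, a i ∈ (span A (Set.range (π ∘ u))).colon (⊤ : Submodule A T) :=
    fun a ha i => mem_colon_span_projectionOnto_torsionByIdeal I hu ha i
  have : FiniteDimensional F T := inferInstanceAs (FiniteDimensional F (T.restrictScalars F))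
  have hproj := ih _ hT (π ∘ u) hdesc (π ∘ u') rfl
  have hker : ker π ≤ span A (Set.range u) := by
    rw [ker_projectionOnto]
    exact smul_le.mpr fun c hc x _ => mem_colon.mp hc x mem_top
  have hdim := finrank_map_add_finrank_ker_of_ker_le (π.restrictScalars F)
    (S := (span A (Set.range u)).restrictScalars F)
    (by rw [ker_restrictScalars]; exact restrictScalars_mono F hker)
  have hdim' := finrank_le_finrank_map_add_finrank_ker (π.restrictScalars F)
    ((span A (Set.range u')).restrictScalars F)
  rw [hspan, hspan, restrictScalars_map, restrictScalars_map] at hproj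
  omega

theorem exists_smul_basis_notMem_of_notMem_colon {κ : Type*} (v : Basis κ F V)
    {W : Submodule A V} {c : A} (hc : c ∉ W.colon (⊤ : Submodule A V)) : ∃ j, c • v j ∉ W := by
  by_contra! h
  suffices ∀ x, c • x ∈ W from hc (mem_colon.mpr fun x _ => this x)
  intro x
  induction (v.span_eq ▸ mem_top : x ∈ span F (Set.range v)) using span_induction with
  | mem _ hy => obtain ⟨j, rfl⟩ := hy; exact h j
  | zero => simp
  | add _ _ _ _ hx hy => rw [smul_add]; exact W.add_mem hx hy
  | smul r _ _ hx => rw [smul_comm]; exact W.smul_of_tower_mem r hx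

theorem restrictScalars_linearCombination_add_smul (u w : ι → V) (ω : F) :
    (Fintype.linearCombination A (u + ω • w)).restrictScalars F =
      (Fintype.linearCombination A u).restrictScalars F +
        ω • (Fintype.linearCombination A w).restrictScalars F := by
  ext b
  simp only [LinearMap.add_apply, LinearMap.smul_apply, LinearMap.restrictScalars_apply,
    Fintype.linearCombination_apply, Pi.add_apply, Pi.smul_apply, smul_add,
    Finset.sum_add_distrib, Finset.smul_sum]
  congr 1
  exact Finset.sum_congr rfl fun i _ => smul_comm _ _ _

theorem exists_finset_finrank_span_lt_update_add_smul [FiniteDimensional F V] [DecidableEq ι]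
    {u : ι → V} {a : ι → A} (ha : ∑ i, a i • u i = 0) {k : ι} {w : V}
    (hw : a k • w ∉ span A (Set.range u)) :
    ∃ bad : Finset F, bad.card ≤ finrank F V ∧ ∀ ω ∉ bad,
      finrank F ((span A (Set.range u)).restrictScalars F) <
        finrank F ((span A (Set.range (Function.update u k (u k + ω • w)))).restrictScalars F) := by
  have hrange : ∀ u' : ι → V, range ((Fintype.linearCombination A u').restrictScalars F) =
      (span A (Set.range u')).restrictScalars F := fun u' => by
    rw [range_restrictScalars, Fintype.range_linearCombination]
  have hψ : Fintype.linearCombination A (Pi.single k w) a = a k • w := by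
    simp [Fintype.linearCombination_apply, Pi.single_apply]
  obtain ⟨bad, hcard, hbad⟩ := LinearMap.exists_finset_finrank_range_lt_add_smul
    ((Fintype.linearCombination A u).restrictScalars F)
    ((Fintype.linearCombination A (Pi.single k w)).restrictScalars F) a ha
    (by rwa [hrange, restrictScalars_mem, LinearMap.restrictScalars_apply, hψ])
  refine ⟨bad, hcard, fun ω hω => ?_⟩
  have hupdate : Function.update u k (u k + ω • w) = u + ω • (Pi.single k w : ι → V) := by
    ext i
    by_cases hik : i = k <;> simp [hik]
  have := hbad ω hω
  rwa [← restrictScalars_linearCombination_add_smul, hrange, hrange, ← hupdate] at this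

end Span

theorem stmt17_general (F A : Type*) [Field F] [Ring A] [Algebra F A]
    (V : Type*) [AddCommGroup V] [Module A V] [Module F V]
    [IsScalarTower F A V] [FiniteDimensional F V]
    [IsSemisimpleModule A V]
    (n : ℕ) (v : Module.Basis (Fin n) F V)
    (ℓ : ℕ) (u : Fin ℓ → V)
    (hnotmax : ∃ u' : Fin ℓ → V,
        Module.finrank F ((Submodule.span A (Set.range u)).restrictScalars F) <
          Module.finrank F ((Submodule.span A (Set.range u')).restrictScalars F)) :
    ∃ (i : Fin ℓ) (j : Fin n) (bad : Finset F), bad.card ≤ n ∧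
      ∀ ω : F, ω ∉ bad →
        Module.finrank F ((Submodule.span A (Set.range u)).restrictScalars F) <
          Module.finrank F ((Submodule.span A
            (Set.range (Function.update u i (u i + ω • v j)))).restrictScalars F) := by
  obtain ⟨u', hu'⟩ := hnotmax
  obtain ⟨a, ha, k, hk⟩ : ∃ a : Fin ℓ → A, ∑ i, a i • u i = 0 ∧
      ∃ k, a k ∉ (span A (Set.range u)).colon (⊤ : Submodule A V) := by
    by_contra! h
    exact (finrank_span_le_of_forall_mem_colon u h u').not_gt hu'
  obtain ⟨j, hj⟩ := exists_smul_basis_notMem_of_notMem_colon v hk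
  obtain ⟨bad, hcard, hbad⟩ := exists_finset_finrank_span_lt_update_add_smul (F := F) ha hj
  exact ⟨k, j, bad, hcard.trans_eq ((finrank_eq_card_basis v).trans (Fintype.card_fin n)), hbad⟩

theorem stmt17 (F A : Type*) [Field F] [Ring A] [Algebra F A]
    [FiniteDimensional F A]
    (V : Type*) [AddCommGroup V] [Module A V] [Module F V]
    [IsScalarTower F A V] [FiniteDimensional F V]
    [IsSemisimpleModule A V]
    (n : ℕ) (v : Module.Basis (Fin n) F V)
    (hF : (n : Cardinal) < Cardinal.mk F)
    (ℓ : ℕ) (u : Fin ℓ → V)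
    (hnotmax : ∃ u' : Fin ℓ → V,
        Module.finrank F ((Submodule.span A (Set.range u)).restrictScalars F) <
          Module.finrank F ((Submodule.span A (Set.range u')).restrictScalars F)) :
    ∃ (i : Fin ℓ) (j : Fin n) (bad : Finset F), bad.card ≤ n ∧
      ∀ ω : F, ω ∉ bad →
        Module.finrank F ((Submodule.span A (Set.range u)).restrictScalars F) <
          Module.finrank F ((Submodule.span A
            (Set.range (Function.update u i (u i + ω • v j)))).restrictScalars F) :=
  stmt17_general F A V n v ℓ u hnotmax
end
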